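/- arXiv:0812.1278 — 11 statements merged into one kernel-verified Lean document; each statement's English description precedes it below -/
import Mathlib

section
/- The graphs A6 and its complement are the only graphs U such that both U and its complement are claw-free and U contains a triangle and a 3-element independent set having no vertex in common; that is, if U ∈ Forb{K_{1,3}, complement of K_{1,3}} contains a triangle and a 3-element independent set that are vertex-disjoint, then U is isomorphic to A6 or to the complement of A6. -/
/-!
Let `t` be the triangle and `s` the independent triple. Forbidding claws centred at the `t i` and
co-claws (a vertex anticomplete to a triangle) at the `s j` leaves only two possible adjacency
patterns between them: a perfect matching or its complement, the latter being `A6` itself. In the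
matching case the complement of the graph has the `A6` pattern, with the roles of `t` and `s`
swapped. Finally, a seventh vertex next to an `A6` pattern always completes a claw or a co-claw.
-/

open SimpleGraph

/-- The claw `K_{1,3}`: vertex 0 joined to each of the pairwise
    nonadjacent vertices 1, 2, 3. -/
def claw : SimpleGraph (Fin 4) := SimpleGraph.fromRel (fun a _ => a = 0)

/-- A graph is claw-free if it has no induced subgraph isomorphic to `K_{1,3}`. -/
def ClawFree {V : Type*} (G : SimpleGraph V) : Prop := IsEmpty (claw ↪g G)

/-- The graph `A6`: a triangle 0,1,2 (= a,b,c) together with pairwise nonadjacent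
    vertices 3,4,5 (= a',b',c'), where 3 is adjacent exactly to 1,2; 4 exactly
    to 0,2; and 5 exactly to 0,1. -/
def A6 : SimpleGraph (Fin 6) := SimpleGraph.fromRel (fun a b =>
  (a = 0 ∧ b = 1) ∨ (a = 0 ∧ b = 2) ∨ (a = 1 ∧ b = 2) ∨
  (a = 3 ∧ b = 1) ∨ (a = 3 ∧ b = 2) ∨ (a = 4 ∧ b = 0) ∨ (a = 4 ∧ b = 2) ∨
  (a = 5 ∧ b = 0) ∨ (a = 5 ∧ b = 1))

open Finset Function

section

variable {V : Type*}

theorem Finset.exists_injective_forall_mem_of_card_eq {s : Finset V} {n : ℕ} (hs : #s = n) :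
    ∃ f : Fin n → V, Injective f ∧ ∀ i, f i ∈ s :=
  ⟨fun i => (s.equivFinOfCardEq hs).symm i, Subtype.val_injective.comp (Equiv.injective _),
    fun i => ((s.equivFinOfCardEq hs).symm i).2⟩

theorem Fin.exists_ne_and_ne (j k : Fin 3) : ∃ l, l ≠ j ∧ l ≠ k := by
  revert j k; decide

theorem exists_perm_of_existsUnique {α : Type*} [Finite α] {H : α → α → Prop}
    (hrow : ∀ i, ∃! j, H i j) (hcol : ∀ j, ∃ i, H i j) :
    ∃ σ : Equiv.Perm α, ∀ i j, H i j ↔ σ i = j := by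
  choose f hf hf_unique using hrow
  have hsurj : Surjective f := fun j =>
    let ⟨i, hi⟩ := hcol j
    ⟨i, (hf_unique i j hi).symm⟩
  exact ⟨Equiv.ofBijective f ⟨Finite.injective_iff_surjective.2 hsurj, hsurj⟩,
    fun i j => ⟨fun hij => (hf_unique i j hij).symm, fun e => e ▸ hf i⟩⟩

def SimpleGraph.Iso.compl {W : Type*} {G : SimpleGraph V} {H : SimpleGraph W} (e : G ≃g H) :
    Gᶜ ≃g Hᶜ :=
  ⟨e.toEquiv, by simp [e.injective.ne_iff, e.map_adj_iff]⟩

section ClawFree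

variable {G : SimpleGraph V}

theorem ClawFree.adj_or_adj_or_adj (hG : ClawFree G) {x p q r : V} (hp : G.Adj x p)
    (hq : G.Adj x q) (hr : G.Adj x r) (hpq : p ≠ q) (hpr : p ≠ r) (hqr : q ≠ r) :
    G.Adj p q ∨ G.Adj p r ∨ G.Adj q r := by
  by_contra! h
  obtain ⟨h1, h2, h3⟩ := h
  refine hG.false ⟨⟨![x, p, q, r], fun i j hij => ?_⟩, fun {i j} => ?_⟩
  · fin_cases i <;> fin_cases j <;> simp_all [hp.ne, hq.ne, hr.ne, hp.ne', hq.ne', hr.ne']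
  · change G.Adj (![x, p, q, r] i) (![x, p, q, r] j) ↔ _
    fin_cases i <;> fin_cases j <;> simp_all [claw, G.adj_comm]

theorem ClawFree.adj_or_adj_or_adj_of_compl (hG : ClawFree Gᶜ) {x p q r : V} (hpq : G.Adj p q)
    (hpr : G.Adj p r) (hqr : G.Adj q r) (hxp : x ≠ p) (hxq : x ≠ q) (hxr : x ≠ r) :
    G.Adj x p ∨ G.Adj x q ∨ G.Adj x r := by
  by_contra! h
  obtain ⟨h1, h2, h3⟩ := h
  have := hG.adj_or_adj_or_adj ((compl_adj G x p).2 ⟨hxp, h1⟩) ((compl_adj G x q).2 ⟨hxq, h2⟩)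
    ((compl_adj G x r).2 ⟨hxr, h3⟩) hpq.ne hpr.ne hqr.ne
  simp [hpq, hpr, hqr] at this

end ClawFree

/-- The adjacency pattern `H i j` between the vertices `t i` of a triangle and `s j` of a disjoint
independent triple, in a graph in which both the graph and its complement are claw-free. The four
fields exclude a co-claw at `s j` over the triangle, a claw at `t i` over the triple, a claw at `t i`
with leaves `s j`, `s k`, `t i'`, and a co-claw at `s j` over the triangle `t i`, `t i'`, `s j'`. -/
structure ClawFreeCross (H : Fin 3 → Fin 3 → Prop) : Prop where
  exists_adj_col : ∀ j, ∃ i, H i j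
  exists_not_adj_row : ∀ i, ∃ j, ¬H i j
  cover : ∀ i j k, j ≠ k → H i j → H i k → ∀ i', H i' j ∨ H i' k
  cocover : ∀ j i i', i ≠ i' → ¬H i j → ¬H i' j → ∀ j', ¬H i j' ∨ ¬H i' j'

namespace ClawFreeCross

variable {H : Fin 3 → Fin 3 → Prop} (h : ClawFreeCross H)
include h

/-- Complementing the graph swaps the roles of the triangle and the independent triple. -/
theorem dual : ClawFreeCross fun j i => ¬H i j where
  exists_adj_col := h.exists_not_adj_row
  exists_not_adj_row j := by simpa using h.exists_adj_col j
  cover j i i' := h.cocover j i i'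
  cocover i j k hjk hj hk i' := by
    simpa using h.cover i j k hjk (not_not.1 hj) (not_not.1 hk) i'

theorem exists_not_adj_col (j : Fin 3) : ∃ i, ¬H i j := by
  by_contra! hfull
  have hzero : ∀ i, ∃ k, k ≠ j ∧ ¬H i k := fun i =>
    let ⟨k, hk⟩ := h.exists_not_adj_row i
    ⟨k, fun e => hk (e ▸ hfull i), hk⟩
  choose z hz using hzero
  obtain ⟨i, i', hii', hzz⟩ := Fintype.exists_ne_map_eq_of_card_lt
    (fun i => (⟨z i, (hz i).1⟩ : {k // k ≠ j})) (by simp [Fintype.card_subtype_compl])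
  replace hzz : z i' = z i := congrArg Subtype.val hzz.symm
  have := h.cocover (z i) i i' hii' (hz i).2 (hzz ▸ (hz i').2) j
  simp [hfull] at this

theorem exists_adj_row (i : Fin 3) : ∃ j, H i j := by
  simpa using h.dual.exists_not_adj_col i

theorem exists_perm_of_card_col_eq_one [DecidableRel H] {j : Fin 3} (hj : #{i | H i j} = 1) :
    ∃ σ : Equiv.Perm (Fin 3), ∀ i j, H i j ↔ σ i = j := by
  obtain ⟨i, hi⟩ := card_eq_one.1 hj
  have hcol : ∀ i', H i' j ↔ i' = i := by simpa [Finset.ext_iff] using hi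
  have hrow : ∀ k, H i k → k = j := by
    intro k hk
    by_contra hkj
    obtain ⟨i', hi'⟩ := h.exists_not_adj_col k
    rcases h.cover i j k (Ne.symm hkj) ((hcol i).2 rfl) hk i' with hi'j | hi'k
    · exact hi' ((hcol i').1 hi'j ▸ hk)
    · exact hi' hi'k
  have hunique : ∀ i' k l, H i' k → H i' l → H i k → k = l := fun i' k l hk hl hik => by
    obtain rfl := hrow k hik
    obtain rfl := (hcol i').1 hk
    exact (hrow l hl).symm
  refine exists_perm_of_existsUnique (fun i' => ?_) h.exists_adj_col
  obtain ⟨k, hk⟩ := h.exists_adj_row i'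
  refine ⟨k, hk, fun l hl => by_contra fun hlk => ?_⟩
  rcases h.cover i' l k hlk hl hk i with hil | hik
  · exact hlk (hunique i' l k hl hk hil)
  · exact hlk (hunique i' k l hk hl hik).symm

/-- Otherwise every column has at least two entries and every row at most one, so double counting
the entries gives `6 ≤ 3`. -/
theorem exists_card_col_eq_one_or_exists_card_row_eq_one [DecidableRel H] :
    (∃ j, #{i | H i j} = 1) ∨ ∃ i, #{j | ¬H i j} = 1 := by
  by_contra! hne
  obtain ⟨hcol, hrow⟩ := hne
  have hcol_two : ∀ j, 2 ≤ #{i | H i j} := fun j => by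
    obtain ⟨i, hi⟩ := h.exists_adj_col j
    have : 0 < #{i | H i j} := card_pos.2 ⟨i, by simpa using hi⟩
    have := hcol j
    omega
  have hrow_one : ∀ i, #{j | H i j} ≤ 1 := fun i => by
    obtain ⟨j, hj⟩ := h.exists_not_adj_row i
    have : 0 < #{j | ¬H i j} := card_pos.2 ⟨j, by simpa using hj⟩
    have := hrow i
    have := card_filter_add_card_filter_not (s := univ) fun j => H i j
    simp only [card_univ, Fintype.card_fin] at this
    omega
  have : 6 ≤ 3 := calc
    6 = ∑ _j : Fin 3, 2 := by simp
    _ ≤ ∑ j, #{i | H i j} := sum_le_sum fun j _ => hcol_two j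
    _ = ∑ i, #{j | H i j} := (sum_card_bipartiteAbove_eq_sum_card_bipartiteBelow H).symm
    _ ≤ ∑ _i : Fin 3, 1 := sum_le_sum fun i _ => hrow_one i
    _ = 3 := by simp
  omega

theorem exists_perm :
    ∃ σ : Equiv.Perm (Fin 3), (∀ i j, H i j ↔ σ i = j) ∨ (∀ i j, H i j ↔ σ i ≠ j) := by
  classical
  rcases h.exists_card_col_eq_one_or_exists_card_row_eq_one with ⟨j, hj⟩ | ⟨i, hi⟩
  · obtain ⟨σ, hσ⟩ := h.exists_perm_of_card_col_eq_one hj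
    exact ⟨σ, .inl hσ⟩
  · obtain ⟨σ, hσ⟩ := h.dual.exists_perm_of_card_col_eq_one hi
    exact ⟨σ.symm, .inr fun i j => by rw [Ne, Equiv.symm_apply_eq, eq_comm, ← hσ, not_not]⟩

end ClawFreeCross

theorem ClawFree.clawFreeCross {U : SimpleGraph V} (hU : ClawFree U) (hUc : ClawFree Uᶜ)
    {t s : Fin 3 → V} (ht : ∀ i j, i ≠ j → U.Adj (t i) (t j)) (hs : ∀ i j, ¬U.Adj (s i) (s j))
    (hs_inj : Injective s) (hts : ∀ i j, t i ≠ s j) :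
    ClawFreeCross fun i j => U.Adj (t i) (s j) where
  exists_adj_col j := by
    rcases hUc.adj_or_adj_or_adj_of_compl (ht 0 1 (by decide)) (ht 0 2 (by decide))
      (ht 1 2 (by decide)) (hts 0 j).symm (hts 1 j).symm (hts 2 j).symm with h | h | h
    exacts [⟨0, h.symm⟩, ⟨1, h.symm⟩, ⟨2, h.symm⟩]
  exists_not_adj_row i := by
    by_contra! h
    rcases hU.adj_or_adj_or_adj (h 0) (h 1) (h 2) (hs_inj.ne (by decide)) (hs_inj.ne (by decide))
      (hs_inj.ne (by decide)) with h | h | h <;> exact hs _ _ h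
  cover i j k hjk hj hk i' := by
    rcases eq_or_ne i' i with rfl | hi'
    · exact .inl hj
    rcases hU.adj_or_adj_or_adj hj hk (ht i i' hi'.symm) (hs_inj.ne hjk) (hts i' j).symm
      (hts i' k).symm with h | h | h
    exacts [absurd h (hs j k), .inl h.symm, .inr h.symm]
  cocover j i i' hii' hj hj' j' := by
    rcases eq_or_ne j' j with rfl | hj''
    · exact .inl hj
    by_contra! h
    rcases hUc.adj_or_adj_or_adj_of_compl (ht i i' hii') h.1 h.2 (hts i j).symm (hts i' j).symm
      (hs_inj.ne hj''.symm) with h | h | h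
    exacts [hj h.symm, hj' h.symm, hs j j' h]

theorem A6_adj_castAdd_castAdd (i j : Fin 3) :
    A6.Adj (Fin.castAdd 3 i) (Fin.castAdd 3 j) ↔ i ≠ j := by
  revert i j; simp only [A6, fromRel_adj]; decide

theorem A6_adj_castAdd_natAdd (i j : Fin 3) :
    A6.Adj (Fin.castAdd 3 i) (Fin.natAdd 3 j) ↔ i ≠ j := by
  revert i j; simp only [A6, fromRel_adj]; decide

theorem A6_not_adj_natAdd_natAdd (i j : Fin 3) : ¬A6.Adj (Fin.natAdd 3 i) (Fin.natAdd 3 j) := by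
  revert i j; simp only [A6, fromRel_adj]; decide

/-- `t` and `s` span a copy of `A6`, with `t i` mapped to `i` and `s j` to `j + 3`. -/
structure IsA6Pattern (U : SimpleGraph V) (t s : Fin 3 → V) : Prop where
  adj_t : ∀ i j, i ≠ j → U.Adj (t i) (t j)
  not_adj_s : ∀ i j, ¬U.Adj (s i) (s j)
  adj_t_s : ∀ i j, U.Adj (t i) (s j) ↔ i ≠ j

namespace IsA6Pattern

section OfClawFreeCross

variable {U : SimpleGraph V} {t s : Fin 3 → V} (ht : ∀ i j, i ≠ j → U.Adj (t i) (t j))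
  (hs : ∀ i j, ¬U.Adj (s i) (s j)) {σ : Equiv.Perm (Fin 3)}
include ht hs

theorem of_adj_iff_ne (hσ : ∀ i j, U.Adj (t i) (s j) ↔ σ i ≠ j) : IsA6Pattern U t (s ∘ σ) :=
  ⟨ht, fun _ _ => hs _ _, fun i j => (hσ i (σ j)).trans σ.injective.ne_iff⟩

theorem compl_of_adj_iff_eq (hs_inj : Injective s) (hts : ∀ i j, t i ≠ s j)
    (hσ : ∀ i j, U.Adj (t i) (s j) ↔ σ i = j) : IsA6Pattern Uᶜ (s ∘ σ) t :=
  ⟨fun i j hij => (compl_adj U _ _).2 ⟨hs_inj.ne (σ.injective.ne hij), hs _ _⟩,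
    fun i j hij => ((compl_adj U _ _).1 hij).2 (ht i j fun e => hij.ne (congrArg t e)),
    fun i j => by simp [U.adj_comm, hσ, hts j, σ.injective.eq_iff, eq_comm]⟩

end OfClawFreeCross

variable {U : SimpleGraph V} {t s : Fin 3 → V} (h : IsA6Pattern U t s)
include h

theorem t_injective : Injective t := fun i j e => by
  by_contra hij
  exact (h.adj_t i j hij).ne e

theorem s_injective : Injective s := fun i j e => by
  by_contra hij
  exact (h.adj_t_s i i).1 (e ▸ (h.adj_t_s i j).2 hij) rfl

theorem t_ne_s (i j : Fin 3) : t i ≠ s j := fun e => by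
  obtain ⟨k, hk⟩ := exists_ne i
  exact h.not_adj_s j k (e ▸ (h.adj_t_s i k).2 hk.symm)

section SeventhVertex

variable (hU : ClawFree U) (hUc : ClawFree Uᶜ) {v : V} (hvt : ∀ i, t i ≠ v) (hvs : ∀ j, s j ≠ v)
include hU hUc hvt hvs

theorem adj_s_or_adj_s {j k : Fin 3} (hjk : j ≠ k) : U.Adj v (s j) ∨ U.Adj v (s k) := by
  by_contra! hv
  obtain ⟨hvj, hvk⟩ := hv
  obtain ⟨l, hlj, hlk⟩ := Fin.exists_ne_and_ne j k
  have hvl : ¬U.Adj (t l) v := fun hvl => by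
    rcases hU.adj_or_adj_or_adj ((h.adj_t_s l j).2 hlj) ((h.adj_t_s l k).2 hlk) hvl
      (h.s_injective.ne hjk) (hvs j) (hvs k) with h' | h' | h'
    exacts [h.not_adj_s j k h', hvj h'.symm, hvk h'.symm]
  have hvtj : U.Adj v (t j) := by
    rcases hUc.adj_or_adj_or_adj_of_compl (h.adj_t l j hlj) ((h.adj_t_s l k).2 hlk)
      ((h.adj_t_s j k).2 hjk) (hvt l).symm (hvt j).symm (hvs k).symm with h' | h' | h'
    exacts [absurd h'.symm hvl, h', absurd h' hvk]
  have hvtk : U.Adj v (t k) := by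
    rcases hUc.adj_or_adj_or_adj_of_compl (h.adj_t l k hlk) ((h.adj_t_s l j).2 hlj)
      ((h.adj_t_s k j).2 hjk.symm) (hvt l).symm (hvt k).symm (hvs j).symm with h' | h' | h'
    exacts [absurd h'.symm hvl, h', absurd h' hvj]
  have hvsl : U.Adj v (s l) := by
    rcases hU.adj_or_adj_or_adj ((h.adj_t_s j k).2 hjk) ((h.adj_t_s j l).2 hlj.symm) hvtj.symm
      (h.s_injective.ne hlk.symm) (hvs k) (hvs l) with h' | h' | h'
    exacts [absurd h' (h.not_adj_s k l), absurd h'.symm hvk, h'.symm]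
  rcases hUc.adj_or_adj_or_adj_of_compl hvsl hvtk ((h.adj_t_s k l).2 hlk.symm).symm (hvs k)
    (h.s_injective.ne hlk.symm) (h.t_ne_s k k).symm with h' | h' | h'
  exacts [hvk h'.symm, h.not_adj_s k l h', (h.adj_t_s k k).1 h'.symm rfl]

theorem not_adj_t {i j : Fin 3} (hvj : ¬U.Adj v (s j)) (hvk : ∀ k, k ≠ j → U.Adj v (s k))
    (hij : i ≠ j) : ¬U.Adj v (t i) := fun hvi => by
  have hvtj : U.Adj v (t j) := by
    rcases hU.adj_or_adj_or_adj hvi.symm ((h.adj_t_s i j).2 hij) (h.adj_t i j hij) (hvs j).symm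
      (hvt j).symm (h.t_ne_s j j).symm with h' | h' | h'
    exacts [absurd h' hvj, h', absurd h'.symm ((h.adj_t_s j j).1 · rfl)]
  rcases hUc.adj_or_adj_or_adj_of_compl (hvk i hij) hvtj ((h.adj_t_s j i).2 hij.symm).symm
    (hvs j) (h.s_injective.ne hij.symm) (h.t_ne_s j j).symm with h' | h' | h'
  exacts [hvj h'.symm, h.not_adj_s j i h', (h.adj_t_s j j).1 h'.symm rfl]

end SeventhVertex

theorem mem_range_or_mem_range (hU : ClawFree U) (hUc : ClawFree Uᶜ) (v : V) :
    v ∈ Set.range t ∨ v ∈ Set.range s := by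
  by_contra! hv
  obtain ⟨hvt, hvs⟩ : (∀ i, t i ≠ v) ∧ ∀ j, s j ≠ v := by simpa using hv
  obtain ⟨j, hvj⟩ : ∃ j, ¬U.Adj v (s j) := by
    by_contra! hall
    rcases hU.adj_or_adj_or_adj (hall 0) (hall 1) (hall 2) (h.s_injective.ne (by decide))
      (h.s_injective.ne (by decide)) (h.s_injective.ne (by decide)) with h' | h' | h' <;>
      exact h.not_adj_s _ _ h'
  have hvk : ∀ k, k ≠ j → U.Adj v (s k) := fun k hk =>
    (h.adj_s_or_adj_s hU hUc hvt hvs hk).resolve_right hvj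
  obtain ⟨i, hij⟩ := exists_ne j
  obtain ⟨i', hi'i, hi'j⟩ := Fin.exists_ne_and_ne i j
  rcases hUc.adj_or_adj_or_adj_of_compl (h.adj_t i i' hi'i.symm) ((h.adj_t_s i j).2 hij)
    ((h.adj_t_s i' j).2 hi'j) (hvt i).symm (hvt i').symm (hvs j).symm with h' | h' | h'
  exacts [h.not_adj_t hU hUc hvt hvs hvj hvk hij h', h.not_adj_t hU hUc hvt hvs hvj hvk hi'j h',
    hvj h']

theorem nonempty_iso (hU : ClawFree U) (hUc : ClawFree Uᶜ) : Nonempty (U ≃g A6) := by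
  let f : Fin (3 + 3) → V := Fin.append t s
  have hinj : Injective f := Fin.append_injective_iff.2 ⟨h.t_injective, h.s_injective, h.t_ne_s⟩
  have hsurj : Surjective f := fun v => by
    rcases h.mem_range_or_mem_range hU hUc v with ⟨i, rfl⟩ | ⟨j, rfl⟩
    exacts [⟨Fin.castAdd 3 i, Fin.append_left t s i⟩, ⟨Fin.natAdd 3 j, Fin.append_right t s j⟩]
  have hadj : ∀ p q : Fin (3 + 3), U.Adj (f p) (f q) ↔ A6.Adj p q := by
    refine Fin.addCases (fun i => Fin.addCases (fun j => ?_) fun j => ?_)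
      fun i => Fin.addCases (fun j => ?_) fun j => ?_ <;>
      simp only [f, Fin.append_left, Fin.append_right]
    · rw [A6_adj_castAdd_castAdd]
      exact ⟨fun hij e => hij.ne (e ▸ rfl), h.adj_t i j⟩
    · rw [A6_adj_castAdd_natAdd]
      exact h.adj_t_s i j
    · rw [A6.adj_comm, A6_adj_castAdd_natAdd, U.adj_comm]
      exact h.adj_t_s j i
    · exact iff_of_false (h.not_adj_s i j) (A6_not_adj_natAdd_natAdd i j)
  exact ⟨(RelIso.mk (Equiv.ofBijective f ⟨hinj, hsurj⟩) (hadj _ _)).symm⟩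

end IsA6Pattern

end

theorem clawfree_disjoint_triangle_indep_general {V : Type*} (U : SimpleGraph V)
    (h : ClawFree U ∧ ClawFree Uᶜ)
    (htri : ∃ s : Finset V, s.card = 3 ∧ U.IsClique (s : Set V) ∧
      ∃ t : Finset V, t.card = 3 ∧ Uᶜ.IsClique (t : Set V) ∧ Disjoint s t) :
    Nonempty (U ≃g A6) ∨ Nonempty (U ≃g A6ᶜ) := by
  obtain ⟨hU, hUc⟩ := h
  obtain ⟨S, hS, hSU, T, hT, hTU, hST⟩ := htri
  obtain ⟨t, ht_inj, htS⟩ := exists_injective_forall_mem_of_card_eq hS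
  obtain ⟨s, hs_inj, hsT⟩ := exists_injective_forall_mem_of_card_eq hT
  have ht i j (hij : i ≠ j) : U.Adj (t i) (t j) := hSU (htS i) (htS j) (ht_inj.ne hij)
  have hs i j : ¬U.Adj (s i) (s j) := fun hij =>
    ((compl_adj U _ _).1 (hTU (hsT i) (hsT j) (hs_inj.ne (hij.ne <| congrArg s ·)))).2 hij
  have hts i j : t i ≠ s j := fun e => disjoint_left.1 hST (htS i) (e ▸ hsT j)
  obtain ⟨σ, hσ | hσ⟩ := (hU.clawFreeCross hUc ht hs hs_inj hts).exists_perm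
  · obtain ⟨e⟩ := (IsA6Pattern.compl_of_adj_iff_eq ht hs hs_inj hts hσ).nonempty_iso hUc
      (by rwa [compl_compl])
    exact .inr ⟨compl_compl U ▸ e.compl⟩
  · exact .inl ((IsA6Pattern.of_adj_iff_ne ht hs hσ).nonempty_iso hU hUc)

/-- If `U` and its complement are claw-free and `U` contains a triangle and a
    3-element independent set that are vertex-disjoint, then `U` is isomorphic
    to `A6` or to the complement of `A6`. -/
theorem clawfree_disjoint_triangle_indep {V : Type*} [Fintype V] (U : SimpleGraph V)
    (h : ClawFree U ∧ ClawFree Uᶜ)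
    (htri : ∃ s : Finset V, s.card = 3 ∧ U.IsClique (s : Set V) ∧
      ∃ t : Finset V, t.card = 3 ∧ Uᶜ.IsClique (t : Set V) ∧ Disjoint s t) :
    Nonempty (U ≃g A6) ∨ Nonempty (U ≃g A6ᶜ) :=
  clawfree_disjoint_triangle_indep_general U h htri
end

section
/- For a graph U the following are equivalent: (1) there exist two graphs G and G' on the vertex set of U having the same 3-element homogeneous subsets such that U is the Boolean sum G ∔ G'; (2) both edge-graphs S(U) and S(Ū) are bipartite. -/
open SimpleGraph

/-- The edge-graph `S(U)` of a graph `U`: its vertices are the edges of `U`,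
    two edges `u = {x,y}` and `v = {x,z}` (with `x, y, z` distinct) being
    adjacent iff `{y,z}` is not an edge of `U`. -/
def edgeGraph {V : Type*} (U : SimpleGraph V) : SimpleGraph U.edgeSet :=
  SimpleGraph.fromRel (fun u v => ∃ x y z : V, x ≠ y ∧ x ≠ z ∧ y ≠ z ∧
    (u : Sym2 V) = s(x, y) ∧ (v : Sym2 V) = s(x, z) ∧ ¬ U.Adj y z)

/-- The Boolean sum `G ∔ G'` of two graphs on the same vertex set: its edge set
    is the symmetric difference of the edge sets of `G` and `G'`. -/
def boolSum {V : Type*} (G G' : SimpleGraph V) : SimpleGraph V := G \ G' ⊔ G' \ G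

/-- `G` and `G'` have the same 3-element homogeneous subsets (a set being
    homogeneous if it is a clique or an independent set). -/
def SameHomog3 {V : Type*} (G G' : SimpleGraph V) : Prop :=
  ∀ s : Finset V, s.card = 3 →
    ((G.IsClique (s : Set V) ∨ Gᶜ.IsClique (s : Set V)) ↔
      (G'.IsClique (s : Set V) ∨ G'ᶜ.IsClique (s : Set V)))

/-!
Since `G' = G ∔ U`, on each triple `G'` is `G` with the `U`-edges of the triple flipped. This
preserves homogeneity of the triple unless it spans one or two `U`-edges, and in these cases it
does exactly when the two edges of the triple with the same `U`-status, which form an edge of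
`S(U)` or of `S(Ū)`, are not both in `G` or both outside it. So `G` and `G ∔ U` have the same
homogeneous triples iff membership in `G` properly 2-colours both `S(U)` and `S(Ū)`; conversely,
2-colourings of `S(U)` and `S(Ū)` together define such a `G`.
-/

/- `aᵢ` and `uᵢ` are the values of `G` and `U` on the edges `xy, xz, yz` of a triangle; the
conjuncts on the right are the conditions at the apexes `x, y, z`. -/
theorem xor_triangle_iff (a₁ a₂ a₃ u₁ u₂ u₃ : Prop) :
    (((a₁ ↔ a₂) ∧ (a₁ ↔ a₃)) ↔
        ((Xor a₁ u₁ ↔ Xor a₂ u₂) ∧ (Xor a₁ u₁ ↔ Xor a₃ u₃))) ↔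
      (((u₁ ↔ u₂) ∧ (u₁ ↔ ¬u₃)) → (a₁ ↔ ¬a₂)) ∧
      (((u₁ ↔ u₃) ∧ (u₁ ↔ ¬u₂)) → (a₁ ↔ ¬a₃)) ∧
      (((u₂ ↔ u₃) ∧ (u₂ ↔ ¬u₁)) → (a₂ ↔ ¬a₃)) := by
  unfold Xor
  by_cases a₁ <;> by_cases a₂ <;> by_cases a₃ <;> by_cases u₁ <;> by_cases u₂ <;> by_cases u₃ <;>
    simp_all

namespace SimpleGraph

variable {V : Type*}

theorem boolSum_adj (G G' : SimpleGraph V) (a b : V) :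
    (boolSum G G').Adj a b ↔ Xor (G.Adj a b) (G'.Adj a b) := Iff.rfl

theorem boolSum_boolSum_cancel_left (G U : SimpleGraph V) : boolSum G (boolSum G U) = U :=
  symmDiff_symmDiff_cancel_left G U

theorem isClique_or_compl_isClique_triple_iff (G : SimpleGraph V) {x y z : V}
    (hxy : x ≠ y) (hxz : x ≠ z) (hyz : y ≠ z) :
    (G.IsClique ({x, y, z} : Set V) ∨ Gᶜ.IsClique ({x, y, z} : Set V)) ↔
      (G.Adj x y ↔ G.Adj x z) ∧ (G.Adj x y ↔ G.Adj y z) := by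
  simp only [isClique_insert, isClique_singleton, Set.mem_insert_iff, Set.mem_singleton_iff,
    forall_eq_or_imp, forall_eq, compl_adj, ne_eq, hxy, hxz, hyz, not_false_eq_true,
    forall_const, true_and]
  tauto

theorem sameHomog3_iff {G H : SimpleGraph V} :
    SameHomog3 G H ↔ ∀ x y z : V, x ≠ y → x ≠ z → y ≠ z →
      (((G.Adj x y ↔ G.Adj x z) ∧ (G.Adj x y ↔ G.Adj y z)) ↔
        ((H.Adj x y ↔ H.Adj x z) ∧ (H.Adj x y ↔ H.Adj y z))) := by
  classical
  constructor
  · intro h x y z hxy hxz hyz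
    have := h {x, y, z} (Finset.card_eq_three.2 ⟨x, y, z, hxy, hxz, hyz, rfl⟩)
    simpa only [Finset.coe_insert, Finset.coe_singleton,
      isClique_or_compl_isClique_triple_iff _ hxy hxz hyz] using this
  · intro h s hs
    obtain ⟨x, y, z, hxy, hxz, hyz, rfl⟩ := Finset.card_eq_three.1 hs
    simpa only [Finset.coe_insert, Finset.coe_singleton,
      isClique_or_compl_isClique_triple_iff _ hxy hxz hyz] using h x y z hxy hxz hyz

/-- The edges of `U` lying in `G` form one colour class of a proper 2-colouring of `S(U)`. -/
def SplitsEdgeGraph (G U : SimpleGraph V) : Prop :=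
  ∀ ⦃x y z : V⦄, y ≠ z → U.Adj x y → U.Adj x z → ¬U.Adj y z → (G.Adj x y ↔ ¬G.Adj x z)

theorem SplitsEdgeGraph.congr {G H U : SimpleGraph V} (hG : SplitsEdgeGraph G U)
    (hGH : ∀ a b, U.Adj a b → (G.Adj a b ↔ H.Adj a b)) : SplitsEdgeGraph H U :=
  fun _ _ _ hyz hxy hxz hn =>
    (hGH _ _ hxy).symm.trans ((hG hyz hxy hxz hn).trans (not_congr (hGH _ _ hxz)))

theorem edgeGraph_adj_mk {U : SimpleGraph V} {x y z : V} (hxy : U.Adj x y) (hxz : U.Adj x z)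
    (hyz : y ≠ z) (hn : ¬U.Adj y z) :
    (edgeGraph U).Adj ⟨s(x, y), U.mem_edgeSet.2 hxy⟩ ⟨s(x, z), U.mem_edgeSet.2 hxz⟩ := by
  refine (fromRel_adj _ _ _).2 ⟨?_, Or.inl ⟨x, y, z, hxy.ne, hxz.ne, hyz, rfl, rfl, hn⟩⟩
  simp [hyz, hxz.ne]

theorem SplitsEdgeGraph.colorable {G U : SimpleGraph V} (hG : SplitsEdgeGraph G U) :
    (edgeGraph U).Colorable 2 := by
  classical
  let color : U.edgeSet → Bool := fun e => decide ((e : Sym2 V) ∈ G.edgeSet)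
  have key : ∀ e f : U.edgeSet, (∃ x y z : V, x ≠ y ∧ x ≠ z ∧ y ≠ z ∧
      (e : Sym2 V) = s(x, y) ∧ (f : Sym2 V) = s(x, z) ∧ ¬U.Adj y z) → color e ≠ color f := by
    rintro ⟨e, he⟩ ⟨f, hf⟩ ⟨x, y, z, -, -, hyz, rfl, rfl, hn⟩
    have := hG hyz he hf hn
    simp only [color, mem_edgeSet, ne_eq, decide_eq_decide]
    tauto
  exact (Coloring.mk color fun {e f} h => ((fromRel_adj _ _ _).1 h).2.elim (key e f)
    fun h' => (key f e h').symm).colorable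

theorem exists_splitsEdgeGraph_of_colorable {U : SimpleGraph V}
    (hU : (edgeGraph U).Colorable 2) : ∃ G : SimpleGraph V, SplitsEdgeGraph G U := by
  obtain ⟨c⟩ := hU
  refine ⟨fromEdgeSet {e | ∃ h : e ∈ U.edgeSet, c ⟨e, h⟩ = 0}, ?_⟩
  intro x y z hyz hxy hxz hn
  have hc := c.valid (edgeGraph_adj_mk hxy hxz hyz hn)
  have hy : s(x, y) ∈ U.edgeSet := hxy
  have hz : s(x, z) ∈ U.edgeSet := hxz
  simp only [fromEdgeSet_adj, Set.mem_ofPred_eq, hy, hz, exists_true_left, hxy.ne, hxz.ne,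
    ne_eq, not_false_eq_true, and_true]
  omega

theorem splitsEdgeGraph_and_compl_iff {G U : SimpleGraph V} :
    SplitsEdgeGraph G U ∧ SplitsEdgeGraph G Uᶜ ↔ ∀ x y z : V, x ≠ y → x ≠ z → y ≠ z →
      (U.Adj x y ↔ U.Adj x z) ∧ (U.Adj x y ↔ ¬U.Adj y z) → (G.Adj x y ↔ ¬G.Adj x z) := by
  constructor
  · rintro ⟨hU, hUc⟩ x y z hxy hxz hyz ⟨h₁, h₂⟩
    by_cases hUxy : U.Adj x y
    · exact hU hyz hUxy (h₁.1 hUxy) (h₂.1 hUxy)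
    · refine hUc hyz ⟨hxy, hUxy⟩ ⟨hxz, mt h₁.2 hUxy⟩ ?_
      simp only [compl_adj, not_and, not_not]
      exact fun _ => not_not.1 (mt h₂.2 hUxy)
  · intro h
    refine ⟨fun x y z hyz hxy hxz hn => h x y z hxy.ne hxz.ne hyz
      ⟨iff_of_true hxy hxz, iff_of_true hxy hn⟩, fun x y z hyz hxy hxz hn => ?_⟩
    rw [compl_adj] at hxy hxz hn
    exact h x y z hxy.1 hxz.1 hyz ⟨iff_of_false hxy.2 hxz.2, iff_of_false hxy.2 (by tauto)⟩

theorem sameHomog3_boolSum_iff {G U : SimpleGraph V} :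
    SameHomog3 G (boolSum G U) ↔ SplitsEdgeGraph G U ∧ SplitsEdgeGraph G Uᶜ := by
  simp only [sameHomog3_iff, splitsEdgeGraph_and_compl_iff, boolSum_adj]
  constructor
  · intro h x y z hxy hxz hyz
    exact ((xor_triangle_iff ..).1 (h x y z hxy hxz hyz)).1
  · intro h x y z hxy hxz hyz
    refine (xor_triangle_iff ..).2 ⟨h x y z hxy hxz hyz, ?_, ?_⟩
    · simpa only [G.adj_comm y x, U.adj_comm y x] using h y x z hxy.symm hyz hxz
    · simpa only [G.adj_comm z x, U.adj_comm z x, G.adj_comm z y, U.adj_comm z y] using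
        h z x y hxz.symm hyz.symm hxy

end SimpleGraph

theorem boolSum_iff_edgeGraphs_bipartite_general {V : Type*} (U : SimpleGraph V) :
    (∃ G G' : SimpleGraph V, SameHomog3 G G' ∧ U = boolSum G G') ↔
      ((edgeGraph U).Colorable 2 ∧ (edgeGraph Uᶜ).Colorable 2) := by
  constructor
  · rintro ⟨G, G', hS, rfl⟩
    have : SameHomog3 G (boolSum G (boolSum G G')) := by rwa [boolSum_boolSum_cancel_left]
    obtain ⟨hU, hUc⟩ := sameHomog3_boolSum_iff.1 this
    exact ⟨hU.colorable, hUc.colorable⟩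
  · rintro ⟨hU, hUc⟩
    obtain ⟨G₁, h₁⟩ := exists_splitsEdgeGraph_of_colorable hU
    obtain ⟨G₂, h₂⟩ := exists_splitsEdgeGraph_of_colorable hUc
    let G := U ⊓ G₁ ⊔ Uᶜ ⊓ G₂
    refine ⟨G, boolSum G U, sameHomog3_boolSum_iff.2 ⟨h₁.congr ?_, h₂.congr ?_⟩,
      (boolSum_boolSum_cancel_left G U).symm⟩
    · intro a b h
      simp [G, h]
    · intro a b h
      simp [G, (compl_adj U a b).1 h]

/-- `U` is the Boolean sum of two graphs having the same 3-element homogeneous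
    subsets iff the edge-graphs `S(U)` and `S(Ūᶜ)` are both bipartite. -/
theorem boolSum_iff_edgeGraphs_bipartite {V : Type*} [Fintype V] (U : SimpleGraph V) :
    (∃ G G' : SimpleGraph V, SameHomog3 G G' ∧ U = boolSum G G') ↔
      ((edgeGraph U).Colorable 2 ∧ (edgeGraph Uᶜ).Colorable 2) :=
  boolSum_iff_edgeGraphs_bipartite_general U
end

section
/- Let G and G' be two graphs on the same vertex set having the same 3-element homogeneous subsets, and let U be their Boolean sum G ∔ G'. If U is disconnected (i.e., not connected), then U contains no triangle, that is, no 3-element cycle. -/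
open SimpleGraph

lemma key_boolSum {V : Type*} (G G' : SimpleGraph V) (h : SameHomog3 G G')
    {d x y : V} (hdx : d ≠ x) (hdy : d ≠ y) (hxy : x ≠ y)
    (hU : (boolSum G G').Adj x y)
    (hx : G.Adj d x ↔ G'.Adj d x) (hy : G.Adj d y ↔ G'.Adj d y) :
    ¬ (G.Adj d x ↔ G.Adj d y) := by
  classical
  intro hiff
  have hcard : ({d, x, y} : Finset V).card = 3 :=
    Finset.card_eq_three.mpr ⟨d, x, y, hdx, hdy, hxy, rfl⟩
  have hh := h {d, x, y} hcard
  have hGc : ∀ (H : SimpleGraph V),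
      H.IsClique ((({d, x, y} : Finset V) : Set V)) ↔
        (H.Adj d x ∧ H.Adj d y ∧ H.Adj x y) := by
    intro H
    constructor
    · intro hc
      exact is3Clique_triple_iff.mp ⟨hc, hcard⟩
    · intro h3
      exact (is3Clique_triple_iff.mpr h3).isClique
  rw [hGc G, hGc G', hGc Gᶜ, hGc G'ᶜ] at hh
  simp only [compl_adj, hdx, hdy, hxy, ne_eq, not_false_eq_true, true_and] at hh
  simp only [boolSum, sup_adj, sdiff_adj] at hU
  tauto

/-- If `G` and `G'` have the same 3-element homogeneous subsets and their
    Boolean sum `U` is disconnected, then `U` contains no triangle. -/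
theorem boolSum_disconnected_triangleFree {V : Type*} [Fintype V] (G G' : SimpleGraph V)
    (h : SameHomog3 G G') (hd : ¬ (boolSum G G').Connected) :
    (boolSum G G').CliqueFree 3 := by
  classical
  intro t ht
  obtain ⟨a, b, c, hab, hac, hbc, -⟩ := is3Clique_iff.mp ht
  apply hd
  rw [connected_iff]
  refine ⟨?_, ⟨a⟩⟩
  have noU : ∀ z w : V, ¬ (boolSum G G').Adj z w →
      (G.Adj w z ↔ G'.Adj w z) := by
    intro z w hadj
    simp only [boolSum, sup_adj, sdiff_adj, not_or, not_and, not_not] at hadj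
    rw [G.adj_comm, G'.adj_comm]
    tauto
  have main : ∀ w : V, (boolSum G G').Reachable a w := by
    intro w
    by_cases hwa : w = a
    · subst hwa; exact Reachable.refl _
    by_cases h1 : (boolSum G G').Adj a w
    · exact h1.reachable
    by_cases h2 : (boolSum G G').Adj b w
    · exact hab.reachable.trans h2.reachable
    by_cases h3 : (boolSum G G').Adj c w
    · exact hac.reachable.trans h3.reachable
    exfalso
    have hwb : w ≠ b := fun e => h1 (by rw [e]; exact hab)
    have hwc : w ≠ c := fun e => h1 (by rw [e]; exact hac)
    have ha := noU a w h1
    have hb := noU b w h2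
    have hc' := noU c w h3
    have k1 := key_boolSum G G' h hwa hwb hab.ne hab ha hb
    have k2 := key_boolSum G G' h hwa hwc hac.ne hac ha hc'
    have k3 := key_boolSum G G' h hwb hwc hbc.ne hbc hb hc'
    tauto
  intro u v
  exact (main u).symm.trans (main v)
end

section
/- For every graph U, the graph U is claw-free (contains no induced subgraph isomorphic to K_{1,3}) if and only if its edge-graph S(U) is triangle-free (contains no induced subgraph isomorphic to K_3). -/
open SimpleGraph

/-!
Three edges of `U` pairwise adjacent in `S(U)` pairwise share an endpoint, and they cannot form
a triangle `{x,y}, {x,z}, {y,z}` because `{y,z}` would then be an edge of `U` although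
`{x,y}` and `{x,z}` are adjacent in `S(U)`. So they form a star `{x,a}, {x,b}, {x,c}`, and
adjacency in `S(U)` says exactly that `a, b, c` are distinct and pairwise nonadjacent, i.e. that
`x, a, b, c` span an induced claw. Conversely, the three edges of an induced claw form a
triangle in `S(U)`.
-/

lemma claw_adj (i j : Fin 4) : claw.Adj i j ↔ i ≠ j ∧ (i = 0 ∨ j = 0) := by
  simp [claw, fromRel_adj]

lemma nonempty_claw_embedding_iff {V : Type*} {U : SimpleGraph V} :
    Nonempty (claw ↪g U) ↔ ∃ x a b c : V, U.Adj x a ∧ U.Adj x b ∧ U.Adj x c ∧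
      a ≠ b ∧ a ≠ c ∧ b ≠ c ∧ ¬ U.Adj a b ∧ ¬ U.Adj a c ∧ ¬ U.Adj b c := by
  constructor
  · rintro ⟨g⟩
    refine ⟨g 0, g 1, g 2, g 3, ?_⟩
    simp only [g.map_adj_iff, g.injective.ne_iff, claw_adj]
    decide
  · rintro ⟨x, a, b, c, hxa, hxb, hxc, hab, hac, hbc, nab, nac, nbc⟩
    refine ⟨⟨⟨![x, a, b, c], ?_⟩, ?_⟩⟩
    · intro i j hij
      fin_cases i <;> fin_cases j <;> simp_all [hxa.ne, hxb.ne, hxc.ne]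
    · intro i j
      change U.Adj (![x, a, b, c] i) (![x, a, b, c] j) ↔ claw.Adj i j
      fin_cases i <;> fin_cases j <;>
        simp [claw_adj, hxa, hxb, hxc, hxa.symm, hxb.symm, hxc.symm, nab, nac, nbc,
          mt U.adj_symm nab, mt U.adj_symm nac, mt U.adj_symm nbc]

section EdgeGraph

variable {V : Type*} {U : SimpleGraph V}

lemma adj_of_coe_eq {e : U.edgeSet} {x a : V} (he : (e : Sym2 V) = s(x, a)) : U.Adj x a :=
  U.mem_edgeSet.1 (he ▸ e.2)

lemma edgeGraph_adj_iff (e f : U.edgeSet) :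
    (edgeGraph U).Adj e f ↔ ∃ x y z : V, x ≠ y ∧ x ≠ z ∧ y ≠ z ∧
      (e : Sym2 V) = s(x, y) ∧ (f : Sym2 V) = s(x, z) ∧ ¬ U.Adj y z := by
  rw [edgeGraph, fromRel_adj]
  constructor
  · rintro ⟨-, h | ⟨x, y, z, hxy, hxz, hyz, hf, he, hadj⟩⟩
    · exact h
    · exact ⟨x, z, y, hxz, hxy, hyz.symm, he, hf, mt U.adj_symm hadj⟩
  · rintro ⟨x, y, z, hxy, hxz, hyz, he, hf, hadj⟩
    refine ⟨?_, Or.inl ⟨x, y, z, hxy, hxz, hyz, he, hf, hadj⟩⟩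
    rintro rfl
    rw [he, Sym2.eq_iff] at hf
    rcases hf with ⟨-, h⟩ | ⟨h, -⟩
    exacts [hyz h, hxz h]

lemma exists_mem_mem_of_edgeGraph_adj {e f : U.edgeSet} (h : (edgeGraph U).Adj e f) :
    ∃ v, v ∈ (e : Sym2 V) ∧ v ∈ (f : Sym2 V) := by
  obtain ⟨x, _, _, -, -, -, he, hf, -⟩ := (edgeGraph_adj_iff e f).1 h
  exact ⟨x, he ▸ Sym2.mem_mk_left x _, hf ▸ Sym2.mem_mk_left x _⟩

lemma edgeGraph_adj_iff_of_eq {e f : U.edgeSet} {x a b : V}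
    (he : (e : Sym2 V) = s(x, a)) (hf : (f : Sym2 V) = s(x, b)) :
    (edgeGraph U).Adj e f ↔ a ≠ b ∧ ¬ U.Adj a b := by
  have hxa : x ≠ a := (adj_of_coe_eq he).ne
  have hxb : x ≠ b := (adj_of_coe_eq hf).ne
  rw [edgeGraph_adj_iff]
  constructor
  · rintro ⟨y, z, w, hyz, hyw, hzw, he', hf', nzw⟩
    rw [he, Sym2.eq_iff] at he'
    rw [hf, Sym2.eq_iff] at hf'
    rcases he' with ⟨rfl, rfl⟩ | ⟨rfl, rfl⟩
    · rcases hf' with ⟨-, rfl⟩ | ⟨h, -⟩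
      exacts [⟨hzw, nzw⟩, (hyw h).elim]
    · rcases hf' with ⟨h, -⟩ | ⟨h, -⟩
      exacts [(hxa h).elim, (hzw h).elim]
  · rintro ⟨hab, nab⟩
    exact ⟨x, a, b, hxa, hxb, hab, he, hf, nab⟩

lemma exists_common_vertex_of_edgeGraph_triangle {e₁ e₂ e₃ : U.edgeSet}
    (h₁₂ : (edgeGraph U).Adj e₁ e₂) (h₁₃ : (edgeGraph U).Adj e₁ e₃)
    (h₂₃ : (edgeGraph U).Adj e₂ e₃) :
    ∃ x a b c : V, (e₁ : Sym2 V) = s(x, a) ∧ (e₂ : Sym2 V) = s(x, b) ∧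
      (e₃ : Sym2 V) = s(x, c) := by
  obtain ⟨x, y, z, -, -, hyz, he₁, he₂, nyz⟩ := (edgeGraph_adj_iff e₁ e₂).1 h₁₂
  obtain ⟨u, hu₁, hu₃⟩ := exists_mem_mem_of_edgeGraph_adj h₁₃
  obtain ⟨v, hv₂, hv₃⟩ := exists_mem_mem_of_edgeGraph_adj h₂₃
  rw [he₁, Sym2.mem_iff] at hu₁
  rw [he₂, Sym2.mem_iff] at hv₂
  by_cases hx : x ∈ (e₃ : Sym2 V)
  · obtain ⟨c, hc⟩ := Sym2.mem_iff_exists.1 hx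
    exact ⟨x, y, z, c, he₁, he₂, hc⟩
  · rcases hu₁ with rfl | rfl
    · exact (hx hu₃).elim
    rcases hv₂ with rfl | rfl
    · exact (hx hv₃).elim
    exact (nyz (adj_of_coe_eq ((Sym2.mem_and_mem_iff hyz).1 ⟨hu₃, hv₃⟩))).elim

end EdgeGraph

theorem clawFree_iff_edgeGraph_triangleFree_general {V : Type*} (U : SimpleGraph V) :
    ClawFree U ↔ (edgeGraph U).CliqueFree 3 := by
  classical
  rw [ClawFree, ← not_nonempty_iff, nonempty_claw_embedding_iff]
  constructor
  · intro hclaw t ht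
    obtain ⟨e₁, e₂, e₃, h₁₂, h₁₃, h₂₃, -⟩ := is3Clique_iff.1 ht
    obtain ⟨x, a, b, c, h₁, h₂, h₃⟩ := exists_common_vertex_of_edgeGraph_triangle h₁₂ h₁₃ h₂₃
    obtain ⟨hab, nab⟩ := (edgeGraph_adj_iff_of_eq h₁ h₂).1 h₁₂
    obtain ⟨hac, nac⟩ := (edgeGraph_adj_iff_of_eq h₁ h₃).1 h₁₃
    obtain ⟨hbc, nbc⟩ := (edgeGraph_adj_iff_of_eq h₂ h₃).1 h₂₃
    exact hclaw ⟨x, a, b, c, adj_of_coe_eq h₁, adj_of_coe_eq h₂,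
      adj_of_coe_eq h₃, hab, hac, hbc, nab, nac, nbc⟩
  · rintro htri ⟨x, a, b, c, hxa, hxb, hxc, hab, hac, hbc, nab, nac, nbc⟩
    let e₁ : U.edgeSet := ⟨s(x, a), hxa⟩
    let e₂ : U.edgeSet := ⟨s(x, b), hxb⟩
    let e₃ : U.edgeSet := ⟨s(x, c), hxc⟩
    refine htri {e₁, e₂, e₃} (is3Clique_triple_iff.2 ⟨?_, ?_, ?_⟩)
    · exact (edgeGraph_adj_iff_of_eq rfl rfl).2 ⟨hab, nab⟩
    · exact (edgeGraph_adj_iff_of_eq rfl rfl).2 ⟨hac, nac⟩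
    · exact (edgeGraph_adj_iff_of_eq rfl rfl).2 ⟨hbc, nbc⟩

/-- A graph `U` is claw-free iff its edge-graph `S(U)` is triangle-free. -/
theorem clawFree_iff_edgeGraph_triangleFree {V : Type*} [Fintype V] (U : SimpleGraph V) :
    ClawFree U ↔ (edgeGraph U).CliqueFree 3 :=
  clawFree_iff_edgeGraph_triangleFree_general U
end

section
/- Let G and G' be two graphs on the same vertex set V of v vertices, let k and t be integers with t ≤ min(k, v − k). If G and G' are k-hypomorphic up to complementation, then G and G' are t-hypomorphic up to complementation. -/
open SimpleGraph

/-- `G` and `H` are isomorphic up to complementation. -/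
def IsoUpToCompl {V W : Type*} (G : SimpleGraph V) (H : SimpleGraph W) : Prop :=
  Nonempty (G ≃g H) ∨ Nonempty (G ≃g Hᶜ)

/-- `G` and `G'` are `k`-hypomorphic up to complementation: for every
    `k`-element set `K` of vertices, the induced subgraphs on `K` are
    isomorphic up to complementation. -/
def HypoUpToCompl {V : Type*} (G G' : SimpleGraph V) (k : ℕ) : Prop :=
  ∀ K : Finset V, K.card = k →
    IsoUpToCompl (G.induce (K : Set V)) (G'.induce (K : Set V))

/-!
Fix a `t`-set `K` and put `f A = [G[A] ≅ G'[K] up to complement] - [G'[A] ≅ G'[K] up to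
complement]`. An isomorphism up to complementation between `G[L]` and `G'[L]` permutes the
`t`-subsets of `L` and preserves their induced graphs up to complementation, so the sum of `f`
over the `t`-subsets of any `k`-set vanishes. For `t ≤ k ≤ |V| - t` this forces `f = 0`: passing
to complements, the sums of `f` over the `t`-sets avoiding `M` vanish for `|M| = |V| - k`, by
double counting also for all smaller `M`, and Möbius inversion over the subsets of a `t`-set `T`
recovers `f T`. In particular `f K = 0`, i.e. `G[K]` and `G'[K]` are isomorphic up to
complementation.
-/

open Finset

section AvoidSum

variable {V β : Type*} [Fintype V] [DecidableEq V]

def avoidSum [AddCommMonoid β] (t : ℕ) (f : Finset V → β) (M : Finset V) : β :=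
  ∑ A ∈ Mᶜ.powersetCard t, f A

theorem sum_avoidSum_insert [AddCommMonoid β] (t : ℕ) (f : Finset V → β) (M : Finset V) :
    ∑ x ∈ Mᶜ, avoidSum t f (insert x M) = (Fintype.card V - #M - t) • avoidSum t f M := by
  have h : ∀ x ∈ Mᶜ, avoidSum t f (insert x M) =
      ∑ A ∈ Mᶜ.powersetCard t, if x ∉ A then f A else 0 := by
    intro x _
    have : (insert x M)ᶜ.powersetCard t = {A ∈ Mᶜ.powersetCard t | x ∉ A} := by
      ext A
      simp only [mem_powersetCard, mem_filter, subset_iff, mem_insert, mem_compl]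
      grind
    rw [avoidSum, this, sum_filter]
  rw [sum_congr rfl h, sum_comm, avoidSum, smul_sum]
  refine sum_congr rfl fun A hA => ?_
  obtain ⟨hAM, hAt⟩ := mem_powersetCard.1 hA
  rw [← sum_filter, sum_const, filter_notMem_eq_sdiff, card_sdiff_of_subset hAM, card_compl,
    hAt]

theorem avoidSum_eq_zero_of_card_le [AddCommMonoid β] [IsAddTorsionFree β] {t m : ℕ}
    {f : Finset V → β} (hm : m + t ≤ Fintype.card V)
    (h : ∀ M : Finset V, #M = m → avoidSum t f M = 0) {M : Finset V} (hM : #M ≤ m) :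
    avoidSum t f M = 0 := by
  induction m generalizing M with
  | zero => exact h M (by omega)
  | succ m ih =>
    obtain hlt | heq := hM.lt_or_eq
    · refine ih (by omega) (fun M' hM' => ?_) (by omega)
      have hsum := sum_avoidSum_insert t f M'
      rw [sum_eq_zero fun x hx => h _ (by rw [card_insert_of_notMem (by simpa using hx), hM'])]
        at hsum
      exact (nsmul_eq_zero_iff_right (by omega)).1 hsum.symm
    · exact h M heq

theorem sum_powerset_neg_one_pow_smul_avoidSum [AddCommGroup β] {t : ℕ} (f : Finset V → β)
    {T : Finset V} (hT : #T = t) :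
    ∑ M ∈ T.powerset, (-1 : ℤ) ^ #M • avoidSum t f M = f T := by
  have hfilter : ∀ M : Finset V,
      avoidSum t f M = ∑ A ∈ univ.powersetCard t, if Disjoint M A then f A else 0 := by
    intro M
    rw [avoidSum, ← sum_filter]
    congr 1
    ext A
    simp [subset_compl_iff_disjoint_left, and_comm]
  have hinner : ∀ A ∈ univ.powersetCard t,
      ∑ M ∈ T.powerset, (-1 : ℤ) ^ #M • (if Disjoint M A then f A else 0) =
        if A = T then f A else 0 := by
    intro A hA
    have hpow : {M ∈ T.powerset | Disjoint M A} = (T \ A).powerset := by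
      ext M
      simp [subset_sdiff]
    simp_rw [smul_ite, smul_zero]
    have hTA : T \ A = ∅ ↔ A = T := by
      rw [sdiff_eq_empty_iff_subset]
      exact ⟨fun hTA => (eq_of_subset_of_card_le hTA
        (by rw [(mem_powersetCard.1 hA).2, hT])).symm, fun h => h ▸ subset_rfl⟩
    rw [← sum_filter, hpow, ← sum_smul, sum_powerset_neg_one_pow_card]
    simp only [hTA, ite_smul, one_smul, zero_smul]
  simp_rw [hfilter, smul_sum]
  rw [sum_comm, sum_congr rfl hinner, sum_ite_eq' , if_pos (by simp [hT])]

theorem eq_zero_of_sum_powersetCard_eq_zero [AddCommGroup β] [IsAddTorsionFree β]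
    {f : Finset V → β} {t k : ℕ} (htk : t ≤ k) (hkV : k + t ≤ Fintype.card V)
    (h : ∀ L : Finset V, #L = k → ∑ A ∈ L.powersetCard t, f A = 0)
    {T : Finset V} (hT : #T = t) : f T = 0 := by
  have hcompl : ∀ M : Finset V, #M = Fintype.card V - k → avoidSum t f M = 0 :=
    fun M hM => h Mᶜ (by rw [card_compl]; omega)
  rw [← sum_powerset_neg_one_pow_smul_avoidSum f hT]
  refine sum_eq_zero fun M hMT => ?_
  have hM : #M ≤ t := hT ▸ card_le_card (mem_powerset.1 hMT)
  rw [avoidSum_eq_zero_of_card_le (by omega) hcompl (by omega), smul_zero]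

end AvoidSum

namespace SimpleGraph

variable {V W : Type*}

def Iso.compl_s7 {G : SimpleGraph V} {H : SimpleGraph W} (e : G ≃g H) : Gᶜ ≃g Hᶜ where
  toEquiv := e.toEquiv
  map_rel_iff' := by simp [e.map_adj_iff]

theorem induce_compl (G : SimpleGraph V) (s : Set V) : Gᶜ.induce s = (G.induce s)ᶜ := by
  ext a b
  simp [Subtype.coe_ne_coe]

end SimpleGraph

section IsoUpToCompl

variable {V W X : Type*} {G : SimpleGraph V} {G' : SimpleGraph W} {H : SimpleGraph X}

theorem IsoUpToCompl.refl (G : SimpleGraph V) : IsoUpToCompl G G :=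
  Or.inl ⟨Iso.refl⟩

theorem IsoUpToCompl.of_isEmpty [IsEmpty V] (G G' : SimpleGraph V) : IsoUpToCompl G G' :=
  Or.inl ⟨⟨Equiv.refl V, fun {a} => isEmptyElim a⟩⟩

theorem isoUpToCompl_congr_left (e : G ≃g G') : IsoUpToCompl G H ↔ IsoUpToCompl G' H := by
  refine ⟨?_, ?_⟩ <;> rintro (⟨⟨f⟩⟩ | ⟨⟨f⟩⟩)
  exacts [.inl ⟨e.symm.trans f⟩, .inr ⟨e.symm.trans f⟩, .inl ⟨e.trans f⟩, .inr ⟨e.trans f⟩]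

theorem isoUpToCompl_compl_left : IsoUpToCompl Gᶜ H ↔ IsoUpToCompl G H := by
  refine ⟨?_, ?_⟩ <;> rintro (⟨⟨f⟩⟩ | ⟨⟨f⟩⟩)
  · exact .inr ⟨compl_compl G ▸ f.compl_s7⟩
  · exact .inl ⟨compl_compl G ▸ compl_compl H ▸ f.compl_s7⟩
  · exact .inr ⟨f.compl_s7⟩
  · exact .inl ⟨compl_compl H ▸ f.compl_s7⟩

end IsoUpToCompl

section InducedCount

open scoped Classical

variable {V W : Type*} {G G' : SimpleGraph V} (H : SimpleGraph W) (t : ℕ) {L : Finset V}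

theorem card_filter_isoUpToCompl_induce_of_iso (e : G.induce L ≃g G'.induce L) :
    #{A ∈ L.powersetCard t | IsoUpToCompl (G.induce (A : Finset V)) H} =
      #{A ∈ L.powersetCard t | IsoUpToCompl (G'.induce (A : Finset V)) H} := by
  -- `σ` extends `e` to a permutation of `V`, so it maps `L` onto itself.
  let σ : Equiv.Perm V := Equiv.Perm.subtypeCongr e.toEquiv (Equiv.refl _)
  have hσ : ∀ a (ha : a ∈ L), σ a = e ⟨a, ha⟩ := fun a ha =>
    Equiv.Perm.subtypeCongr.left_apply _ _ ha
  have hσL : L.map σ.toEmbedding = L :=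
    eq_of_subset_of_card_le (fun b hb => by
      obtain ⟨a, ha, rfl⟩ := mem_map.1 hb
      simp [hσ a ha]) (card_map _).ge
  have hiso : ∀ A ⊆ L, Nonempty (G.induce A ≃g G'.induce (A.map σ.toEmbedding)) := by
    intro A hAL
    refine ⟨⟨Equiv.subtypeEquiv σ fun a => by simp, fun {a b} => ?_⟩⟩
    have ha := hAL a.2
    have hb := hAL b.2
    simpa [hσ _ ha, hσ _ hb] using e.map_adj_iff (v := ⟨a, ha⟩) (w := ⟨b, hb⟩)
  have hσpow : (L.powersetCard t).map (mapEmbedding σ.toEmbedding).toEmbedding =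
      L.powersetCard t := by
    rw [← powersetCard_map, hσL]
  conv_rhs => rw [← hσpow, filter_map, card_map]
  refine congrArg card (filter_congr fun A hA => ?_)
  obtain ⟨f⟩ := hiso A (mem_powersetCard.1 hA).1
  exact isoUpToCompl_congr_left f

theorem card_filter_isoUpToCompl_induce_eq
    (hL : IsoUpToCompl (G.induce L) (G'.induce L)) :
    #{A ∈ L.powersetCard t | IsoUpToCompl (G.induce (A : Finset V)) H} =
      #{A ∈ L.powersetCard t | IsoUpToCompl (G'.induce (A : Finset V)) H} := by
  obtain ⟨⟨e⟩⟩ | ⟨⟨e⟩⟩ := hL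
  · exact card_filter_isoUpToCompl_induce_of_iso H t e
  · rw [← induce_compl] at e
    rw [card_filter_isoUpToCompl_induce_of_iso H t e]
    simp only [induce_compl, isoUpToCompl_compl_left]

end InducedCount

/-- If `t ≤ min(k, v - k)` and `G`, `G'` (on a common `v`-element vertex set)
    are `k`-hypomorphic up to complementation, then they are `t`-hypomorphic up
    to complementation. -/
theorem hypo_down {V : Type*} [Fintype V] (G G' : SimpleGraph V) (k t : ℕ)
    (ht : t ≤ min k (Fintype.card V - k)) (h : HypoUpToCompl G G' k) :
    HypoUpToCompl G G' t := by
  classical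
  intro K hK
  obtain ⟨htk, htV⟩ := le_min_iff.1 ht
  by_cases hkV : k ≤ Fintype.card V
  swap
  · obtain rfl : K = ∅ := card_eq_zero.1 (by omega)
    rw [coe_empty]
    exact IsoUpToCompl.of_isEmpty _ _
  let f : Finset V → ℤ := fun A =>
    (if IsoUpToCompl (G.induce A) (G'.induce K) then 1 else 0) -
      (if IsoUpToCompl (G'.induce A) (G'.induce K) then 1 else 0)
  have hf : ∀ L : Finset V, #L = k → ∑ A ∈ L.powersetCard t, f A = 0 := fun L hL => by
    simp only [f, sum_sub_distrib, sum_boole,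
      card_filter_isoUpToCompl_induce_eq _ t (h L hL), sub_self]
  have hfK := eq_zero_of_sum_powersetCard_eq_zero htk (by omega) hf hK
  simpa [f, IsoUpToCompl.refl, sub_eq_zero] using hfK
end

section
/- Let U be a graph such that both U and its complement are claw-free. Then for every pair x, y of distinct vertices of U, the set of vertices adjacent to x in U and adjacent to y in the complement of U (i.e., N_U(x) ∩ N_Ū(y)) has at most 2 elements. -/
open SimpleGraph

/-! If `x ~ y` in `U`, then `y` is a `U`-neighbour of `x` that is non-adjacent in `U` to every vertex of
`N_U(x) ∩ N_Ū(y)`, so claw-freeness of `U` at `x` makes that set a clique of `U`; three of its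
vertices would then be an independent set of `Ū` inside `N_Ū(y)`, a claw of `Ū` at `y`.
If `x ≁ y`, the same argument applies to `Ū` with `x` and `y` exchanged. -/

section

variable {V : Type*} {G : SimpleGraph V}

theorem ClawFree.adj_or_adj_or_adj_s13 (hG : ClawFree G) {c a b d : V}
    (hca : G.Adj c a) (hcb : G.Adj c b) (hcd : G.Adj c d)
    (hab : a ≠ b) (had : a ≠ d) (hbd : b ≠ d) :
    G.Adj a b ∨ G.Adj a d ∨ G.Adj b d := by
  by_contra! ⟨nab, nad, nbd⟩
  refine hG.false ⟨⟨![c, a, b, d], fun i j hij => ?_⟩, fun {i j} => ?_⟩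
  · fin_cases i <;> fin_cases j <;>
      simp_all [hca.ne, hcb.ne, hcd.ne, hca.ne.symm, hcb.ne.symm, hcd.ne.symm]
  · change G.Adj (![c, a, b, d] i) (![c, a, b, d] j) ↔ claw.Adj i j
    fin_cases i <;> fin_cases j <;>
      simp_all [claw, hca.symm, hcb.symm, hcd.symm, G.adj_comm b a, G.adj_comm d a,
        G.adj_comm d b]

theorem not_three_mem_neighborSet_inter_compl (hG : ClawFree G) (hGc : ClawFree Gᶜ) {x y : V}
    (hxy : G.Adj x y) {a b c : V}
    (ha : a ∈ G.neighborSet x ∩ Gᶜ.neighborSet y) (hb : b ∈ G.neighborSet x ∩ Gᶜ.neighborSet y)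
    (hc : c ∈ G.neighborSet x ∩ Gᶜ.neighborSet y) (hab : a ≠ b) (hac : a ≠ c) (hbc : b ≠ c) :
    False := by
  have adj_of_mem {p q : V} (hp : p ∈ G.neighborSet x ∩ Gᶜ.neighborSet y)
      (hq : q ∈ G.neighborSet x ∩ Gᶜ.neighborSet y) (hpq : p ≠ q) : G.Adj p q := by
    rcases hG.adj_or_adj_or_adj_s13 hxy hp.1 hq.1 hp.2.1 hq.2.1 hpq with hyp | hyq | hpq
    · exact absurd hyp hp.2.2
    · exact absurd hyq hq.2.2
    · exact hpq
  rcases hGc.adj_or_adj_or_adj_s13 ha.2 hb.2 hc.2 hab hac hbc with h | h | h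
  · exact h.2 (adj_of_mem ha hb hab)
  · exact h.2 (adj_of_mem ha hc hac)
  · exact h.2 (adj_of_mem hb hc hbc)

end

theorem clawfree_common_neighborhood_general {V : Type*} (U : SimpleGraph V)
    (h : ClawFree U ∧ ClawFree Uᶜ) (x y : V) (hxy : x ≠ y) :
    (U.neighborSet x ∩ Uᶜ.neighborSet y).ncard ≤ 2 := by
  wlog hUxy : U.Adj x y generalizing U x y
  · have hUcyx : Uᶜ.Adj y x := ⟨hxy.symm, fun h => hUxy h.symm⟩
    have := this Uᶜ ⟨h.2, by rw [compl_compl]; exact h.1⟩ y x hxy.symm hUcyx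
    rwa [compl_compl, Set.inter_comm] at this
  by_contra! hcard
  obtain ⟨a, ha, b, hb, c, hc, hab, hac, hbc⟩ :=
    (Set.two_lt_ncard (Set.finite_of_ncard_pos (by omega))).mp hcard
  exact not_three_mem_neighborSet_inter_compl h.1 h.2 hUxy ha hb hc hab hac hbc

/-- If `U` and its complement are claw-free, then for distinct vertices `x, y`
    the set `N_U(x) ∩ N_{Uᶜ}(y)` has at most two elements. -/
theorem clawfree_common_neighborhood {V : Type*} [Fintype V] (U : SimpleGraph V)
    (h : ClawFree U ∧ ClawFree Uᶜ) (x y : V) (hxy : x ≠ y) :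
    (U.neighborSet x ∩ Uᶜ.neighborSet y).ncard ≤ 2 :=
  clawfree_common_neighborhood_general U h x y hxy
end

section
/- Let U be a graph such that both U and its complement are claw-free. If U contains a triangle A and a 3-element independent set B with exactly one vertex in common, then the subgraph induced by U on A ∪ B (a 5-element set) is isomorphic to the bull B5. -/
open SimpleGraph

/-- The bull `B5`: a triangle 0,1,2 with pendant edges 3–1 and 4–2. -/
def B5 : SimpleGraph (Fin 5) := SimpleGraph.fromRel (fun a b =>
  (a = 0 ∧ b = 1) ∨ (a = 0 ∧ b = 2) ∨ (a = 1 ∧ b = 2) ∨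
  (a = 3 ∧ b = 1) ∨ (a = 4 ∧ b = 2))

/-- The graph `E6`: a 4-cycle 0,1,2,3 together with a vertex 4 adjacent exactly
    to 0 and 3 and a vertex 5 adjacent exactly to 2 and 3. -/
def E6 : SimpleGraph (Fin 6) := SimpleGraph.fromRel (fun a b =>
  (a = 0 ∧ b = 1) ∨ (a = 1 ∧ b = 2) ∨ (a = 2 ∧ b = 3) ∨ (a = 3 ∧ b = 0) ∨
  (a = 4 ∧ b = 0) ∨ (a = 4 ∧ b = 3) ∨ (a = 5 ∧ b = 2) ∨ (a = 5 ∧ b = 3))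

/-! Write `A = {x, a₁, a₂}` and `B = {x, b₁, b₂}`. A claw centred at `aᵢ` with leaves `x, b₁, b₂`
shows that each `aᵢ` misses some `bⱼ`; a claw of the complement centred at `bⱼ` with leaves
`x, a₁, a₂` shows that each `bⱼ` sees some `aᵢ`. Hence the edges between `{a₁, a₂}` and `{b₁, b₂}`
form a perfect matching, and the triangle, the independent set and this matching make up a bull. -/

theorem Set.eq_triple_of_mem_of_ncard_eq_three {α : Type*} {s : Set α} {x : α}
    (hs : s.ncard = 3) (hx : x ∈ s) :
    ∃ y z, x ≠ y ∧ x ≠ z ∧ y ≠ z ∧ s = {x, y, z} := by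
  obtain ⟨a, b, c, hab, hac, hbc, rfl⟩ := Set.ncard_eq_three.mp hs
  simp only [Set.mem_insert_iff, Set.mem_singleton_iff] at hx
  rcases hx with rfl | rfl | rfl
  · exact ⟨b, c, hab, hac, hbc, rfl⟩
  · exact ⟨a, c, hab.symm, hbc, hac, Set.insert_comm _ _ _⟩
  · exact ⟨a, b, hac.symm, hbc.symm, hab, by rw [Set.pair_comm b, Set.insert_comm]⟩

namespace SimpleGraph

variable {V W : Type*} {G : SimpleGraph V} {H : SimpleGraph W}

def embeddingOfAdjIff (hH : Function.Injective H.neighborSet) (f : W → V)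
    (hf : ∀ i j, G.Adj (f i) (f j) ↔ H.Adj i j) : H ↪g G where
  toFun := f
  inj' i j hij := hH <| Set.ext fun k => by
    rw [mem_neighborSet, mem_neighborSet, ← hf, ← hf, hij]
  map_rel_iff' := hf _ _

theorem ClawFree.not_adj_or_not_adj_of_isIndepSet (hG : ClawFree G) {c x y z : V}
    (hs : G.IsIndepSet {x, y, z}) (hxy : x ≠ y) (hxz : x ≠ z) (hyz : y ≠ z)
    (hcx : G.Adj c x) : ¬G.Adj c y ∨ ¬G.Adj c z := by
  by_contra! ⟨hcy, hcz⟩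
  have nxy : ¬G.Adj x y := hs (by simp) (by simp) hxy
  have nxz : ¬G.Adj x z := hs (by simp) (by simp) hxz
  have nyz : ¬G.Adj y z := hs (by simp) (by simp) hyz
  refine hG.false ⟨⟨![c, x, y, z], fun i j hij => ?_⟩, fun {i j} => ?_⟩
  · fin_cases i <;> fin_cases j <;>
      simp_all [hcx.ne, hcy.ne, hcz.ne, hcx.ne', hcy.ne', hcz.ne']
  · show G.Adj (![c, x, y, z] i) (![c, x, y, z] j) ↔ claw.Adj i j
    fin_cases i <;> fin_cases j <;>
      simp_all [claw, G.adj_comm]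

theorem ClawFree.adj_or_adj_of_isClique (hGc : ClawFree Gᶜ) {c x y z : V}
    (hs : G.IsClique {x, y, z}) (hxy : x ≠ y) (hxz : x ≠ z) (hyz : y ≠ z)
    (hcx : Gᶜ.Adj c x) (hc : c ∉ ({x, y, z} : Set V)) : G.Adj y c ∨ G.Adj z c := by
  simp only [Set.mem_insert_iff, Set.mem_singleton_iff, not_or] at hc
  simpa [hc, G.adj_comm c] using
    hGc.not_adj_or_not_adj_of_isIndepSet ((isIndepSet_compl G).mpr hs) hxy hxz hyz hcx

instance : DecidableRel B5.Adj := fun _ _ => by unfold B5; infer_instance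

theorem neighborSet_B5_injective : Function.Injective B5.neighborSet := by
  have key : ∀ i j : Fin 5, (∀ k, B5.Adj i k ↔ B5.Adj j k) → i = j := by decide
  exact fun i j h => key i j fun k => Set.ext_iff.mp h k

theorem nonempty_induce_iso_B5 {x a₁ a₂ b₁ b₂ : V}
    (hxa₁ : G.Adj x a₁) (hxa₂ : G.Adj x a₂) (ha : G.Adj a₁ a₂)
    (hxb₁ : ¬G.Adj x b₁) (hxb₂ : ¬G.Adj x b₂) (hb : ¬G.Adj b₁ b₂)
    (h₁₁ : G.Adj a₁ b₁) (h₂₂ : G.Adj a₂ b₂) (h₁₂ : ¬G.Adj a₁ b₂) (h₂₁ : ¬G.Adj a₂ b₁) :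
    Nonempty (G.induce {x, a₁, a₂, b₁, b₂} ≃g B5) := by
  -- No distinctness hypotheses are needed: the vertices of the bull have distinct neighbourhoods.
  let f : B5 ↪g G := embeddingOfAdjIff neighborSet_B5_injective ![x, a₁, a₂, b₁, b₂]
    fun i j => by fin_cases i <;> fin_cases j <;> simp_all [B5, G.adj_comm]
  have hrange : Set.range f = {x, a₁, a₂, b₁, b₂} := by
    change Set.range ![x, a₁, a₂, b₁, b₂] = _
    simp only [Matrix.range_cons, Matrix.range_empty, Set.union_empty, Set.singleton_union]
  exact ⟨hrange ▸ f.isoInduceRange.symm⟩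

theorem ClawFree.triangle_indep_matching (hG : ClawFree G) (hGc : ClawFree Gᶜ)
    {x a₁ a₂ b₁ b₂ : V} (hA : G.IsClique {x, a₁, a₂}) (hB : Gᶜ.IsClique {x, b₁, b₂})
    (hxa₁ : x ≠ a₁) (hxa₂ : x ≠ a₂) (ha : a₁ ≠ a₂) (hxb₁ : x ≠ b₁) (hxb₂ : x ≠ b₂) (hb : b₁ ≠ b₂)
    (hb₁ : b₁ ∉ ({x, a₁, a₂} : Set V)) (hb₂ : b₂ ∉ ({x, a₁, a₂} : Set V)) :
    (G.Adj a₁ b₁ ∧ G.Adj a₂ b₂ ∧ ¬G.Adj a₁ b₂ ∧ ¬G.Adj a₂ b₁) ∨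
      (G.Adj a₁ b₂ ∧ G.Adj a₂ b₁ ∧ ¬G.Adj a₁ b₁ ∧ ¬G.Adj a₂ b₂) := by
  have hB' := (isClique_compl G).mp hB
  have hG₁ := hG.not_adj_or_not_adj_of_isIndepSet hB' hxb₁ hxb₂ hb
    (hA (by simp) (by simp) hxa₁.symm)
  have hG₂ := hG.not_adj_or_not_adj_of_isIndepSet hB' hxb₁ hxb₂ hb
    (hA (by simp) (by simp) hxa₂.symm)
  have hGc₁ := hGc.adj_or_adj_of_isClique hA hxa₁ hxa₂ ha (hB (by simp) (by simp) hxb₁.symm) hb₁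
  have hGc₂ := hGc.adj_or_adj_of_isClique hA hxa₁ hxa₂ ha (hB (by simp) (by simp) hxb₂.symm) hb₂
  tauto

end SimpleGraph

theorem clawfree_triangle_indep_bull_general {V : Type*} (U : SimpleGraph V)
    (h : ClawFree U ∧ ClawFree Uᶜ) (A B : Set V)
    (hA3 : A.ncard = 3) (hA : U.IsClique A)
    (hB3 : B.ncard = 3) (hB : Uᶜ.IsClique B)
    (x : V) (hx : A ∩ B = {x}) :
    Nonempty (U.induce (A ∪ B) ≃g B5) := by
  have hxAB : x ∈ A ∩ B := hx ▸ rfl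
  have hAB : ∀ v ∈ A, v ∈ B → v = x := fun v hvA hvB => hx.subset ⟨hvA, hvB⟩
  obtain ⟨a₁, a₂, hxa₁, hxa₂, ha, rfl⟩ := Set.eq_triple_of_mem_of_ncard_eq_three hA3 hxAB.1
  obtain ⟨b₁, b₂, hxb₁, hxb₂, hb, rfl⟩ := Set.eq_triple_of_mem_of_ncard_eq_three hB3 hxAB.2
  have hb₁A : b₁ ∉ ({x, a₁, a₂} : Set V) := fun h => hxb₁ (hAB b₁ h (by simp)).symm
  have hb₂A : b₂ ∉ ({x, a₁, a₂} : Set V) := fun h => hxb₂ (hAB b₂ h (by simp)).symm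
  have hB' := (isClique_compl U).mp hB
  have hxa₁' : U.Adj x a₁ := hA (by simp) (by simp) hxa₁
  have hxa₂' : U.Adj x a₂ := hA (by simp) (by simp) hxa₂
  have ha' : U.Adj a₁ a₂ := hA (by simp) (by simp) ha
  have hxb₁' : ¬U.Adj x b₁ := hB' (by simp) (by simp) hxb₁
  have hxb₂' : ¬U.Adj x b₂ := hB' (by simp) (by simp) hxb₂
  have hb' : ¬U.Adj b₁ b₂ := hB' (by simp) (by simp) hb
  rcases h.1.triangle_indep_matching h.2 hA hB hxa₁ hxa₂ ha hxb₁ hxb₂ hb hb₁A hb₂A with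
    ⟨h₁₁, h₂₂, h₁₂, h₂₁⟩ | ⟨h₁₂, h₂₁, h₁₁, h₂₂⟩
  · rw [show ({x, a₁, a₂} ∪ {x, b₁, b₂} : Set V) = {x, a₁, a₂, b₁, b₂} by ext; simp; tauto]
    exact nonempty_induce_iso_B5 hxa₁' hxa₂' ha' hxb₁' hxb₂' hb' h₁₁ h₂₂ h₁₂ h₂₁
  · rw [show ({x, a₁, a₂} ∪ {x, b₁, b₂} : Set V) = {x, a₁, a₂, b₂, b₁} by ext; simp; tauto]
    exact nonempty_induce_iso_B5 hxa₁' hxa₂' ha' hxb₂' hxb₁' (hb' ·.symm) h₁₂ h₂₁ h₁₁ h₂₂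

/-- If `U` and its complement are claw-free, and `U` contains a triangle `A`
    and a 3-element independent set `B` with exactly one vertex in common, then
    the subgraph induced on `A ∪ B` is isomorphic to the bull `B5`. -/
theorem clawfree_triangle_indep_bull {V : Type*} [Fintype V] (U : SimpleGraph V)
    (h : ClawFree U ∧ ClawFree Uᶜ) (A B : Set V)
    (hA3 : A.ncard = 3) (hA : U.IsClique A)
    (hB3 : B.ncard = 3) (hB : Uᶜ.IsClique B)
    (x : V) (hx : A ∩ B = {x}) :
    Nonempty (U.induce (A ∪ B) ≃g B5) :=
  clawfree_triangle_indep_bull_general U h A B hA3 hA hB3 hB x hx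
end

section
/- Let U be a graph such that both U and its complement are claw-free, and let x be a vertex of U belonging to some 3-element independent set. Then any two distinct triangles of U containing x have no edge in common; that is, if T1 and T2 are triangles of U with x ∈ T1, x ∈ T2 and T1 ≠ T2, then T1 ∩ T2 = {x}. -/
open SimpleGraph

/-!
Write the independent triple as `{x, y, z}` and the two triangles as `{x, a, b}` and `{x, a, d}`
with `b ≠ d`. Since `Uᶜ` is claw-free, every vertex has a neighbour in every triangle; since `U`
is claw-free, no vertex is adjacent to all of `x, y, z`. A vertex nonadjacent to `x` therefore has
a neighbour in `{b, d}`: otherwise it is adjacent to `a`, and `b, d` together with it form a claw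
at `a` (or, if `b ~ d`, it misses the triangle `{x, b, d}`). So say `y ~ b`; then `z ≁ b`, hence
`z ~ d` and `y ≁ d`. Now `z` must meet the triangle `{x, a, b}` and `y` the triangle `{x, a, d}`,
both in `a`, so `a` is adjacent to `x, y, z`.
-/

namespace ClawFree

variable {V : Type*} {G : SimpleGraph V}

theorem not_adj_of_adj_of_adj (h : ClawFree G) {c l₁ l₂ l₃ : V}
    (h₁₂ : l₁ ≠ l₂) (h₁₃ : l₁ ≠ l₃) (h₂₃ : l₂ ≠ l₃)
    (n₁₂ : ¬G.Adj l₁ l₂) (n₁₃ : ¬G.Adj l₁ l₃) (n₂₃ : ¬G.Adj l₂ l₃)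
    (a₁ : G.Adj c l₁) (a₂ : G.Adj c l₂) : ¬G.Adj c l₃ := by
  intro a₃
  have hc₁ : c ≠ l₁ := a₁.ne
  have hc₂ : c ≠ l₂ := a₂.ne
  have hc₃ : c ≠ l₃ := a₃.ne
  refine h.elim ⟨⟨![c, l₁, l₂, l₃], ?_⟩, ?_⟩
  · intro i j hij
    fin_cases i <;> fin_cases j <;> simp_all
  · intro i j
    change G.Adj (![c, l₁, l₂, l₃] i) (![c, l₁, l₂, l₃] j) ↔ claw.Adj i j
    fin_cases i <;> fin_cases j <;>
      simp [claw, G.adj_comm, a₁, a₂, a₃, n₁₂, n₁₃, n₂₃]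

theorem adj_or_adj_or_adj_of_compl_s15 (h : ClawFree Gᶜ) {l₁ l₂ l₃ : V}
    (a₁₂ : G.Adj l₁ l₂) (a₁₃ : G.Adj l₁ l₃) (a₂₃ : G.Adj l₂ l₃) (w : V) :
    G.Adj w l₁ ∨ G.Adj w l₂ ∨ G.Adj w l₃ := by
  by_contra! ⟨n₁, n₂, n₃⟩
  have hw₁ : w ≠ l₁ := by rintro rfl; exact n₂ a₁₂
  have hw₂ : w ≠ l₂ := by rintro rfl; exact n₁ a₁₂.symm
  refine h.not_adj_of_adj_of_adj a₁₂.ne a₁₃.ne a₂₃.ne (fun h => h.2 a₁₂) (fun h => h.2 a₁₃)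
    (fun h => h.2 a₂₃) ⟨hw₁, n₁⟩ ⟨hw₂, n₂⟩ ⟨?_, n₃⟩
  rintro rfl
  exact n₁ a₁₃.symm

end ClawFree

section TwoTriangles

variable {V : Type*} {U : SimpleGraph V}

theorem adj_or_adj_of_triangles_on_edge (h₁ : ClawFree U) (h₂ : ClawFree Uᶜ) {x a b d y : V}
    (Uxa : U.Adj x a) (Uxb : U.Adj x b) (Uab : U.Adj a b)
    (Uxd : U.Adj x d) (Uad : U.Adj a d) (hbd : b ≠ d) (nyx : ¬U.Adj y x) :
    U.Adj y b ∨ U.Adj y d := by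
  by_contra! ⟨nyb, nyd⟩
  have Uya : U.Adj y a :=
    ((h₂.adj_or_adj_or_adj_of_compl_s15 Uxa Uxb Uab y).resolve_left nyx).resolve_right nyb
  by_cases Ubd : U.Adj b d
  · simpa [nyx, nyb, nyd] using h₂.adj_or_adj_or_adj_of_compl_s15 Uxb Uxd Ubd y
  · have hyb : y ≠ b := by rintro rfl; exact nyx Uxb.symm
    have hyd : y ≠ d := by rintro rfl; exact nyx Uxd.symm
    exact h₁.not_adj_of_adj_of_adj hbd hyb.symm hyd.symm Ubd (fun h => nyb h.symm)
      (fun h => nyd h.symm) Uab Uad Uya.symm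

theorem false_of_isIndep_of_triangles_on_edge (h₁ : ClawFree U) (h₂ : ClawFree Uᶜ)
    {x a b d y z : V}
    (Uxa : U.Adj x a) (Uxb : U.Adj x b) (Uab : U.Adj a b)
    (Uxd : U.Adj x d) (Uad : U.Adj a d) (hbd : b ≠ d)
    (hxy : x ≠ y) (hxz : x ≠ z) (hyz : y ≠ z)
    (nxy : ¬U.Adj x y) (nxz : ¬U.Adj x z) (nyz : ¬U.Adj y z) : False := by
  wlog Uyb : U.Adj y b generalizing b d
  · have Uyd := (adj_or_adj_of_triangles_on_edge h₁ h₂ Uxa Uxb Uab Uxd Uad hbd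
      (fun h => nxy h.symm)).resolve_left Uyb
    exact this Uxd Uad Uxb Uab hbd.symm Uyd
  have no_common_neighbour : ∀ {v}, U.Adj v x → U.Adj v y → ¬U.Adj v z :=
    h₁.not_adj_of_adj_of_adj hxy hxz hyz nxy nxz nyz
  have nzb : ¬U.Adj z b := fun h => no_common_neighbour Uxb.symm Uyb.symm h.symm
  have Uzd : U.Adj z d := (adj_or_adj_of_triangles_on_edge h₁ h₂ Uxa Uxb Uab Uxd Uad hbd
    (fun h => nxz h.symm)).resolve_left nzb
  have nyd : ¬U.Adj y d := fun h => no_common_neighbour Uxd.symm h.symm Uzd.symm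
  have Uza : U.Adj z a := ((h₂.adj_or_adj_or_adj_of_compl_s15 Uxa Uxb Uab z).resolve_left
    (fun h => nxz h.symm)).resolve_right nzb
  have Uya : U.Adj y a := ((h₂.adj_or_adj_or_adj_of_compl_s15 Uxa Uxd Uad y).resolve_left
    (fun h => nxy h.symm)).resolve_right nyd
  exact no_common_neighbour Uxa.symm Uya.symm Uza.symm

end TwoTriangles

theorem Set.exists_eq_triple_of_ncard_eq_three {α : Type*} {s : Set α} (hs : s.ncard = 3)
    {x w : α} (hx : x ∈ s) (hw : w ∈ s) (hxw : x ≠ w) :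
    ∃ t, t ≠ x ∧ t ≠ w ∧ s = {x, w, t} := by
  have hxws : {x, w} ⊆ s := Set.insert_subset hx (Set.singleton_subset_iff.mpr hw)
  obtain ⟨t, ht⟩ : ∃ t, s \ {x, w} = {t} := by
    rw [← Set.ncard_eq_one, Set.ncard_sdiff hxws, hs, Set.ncard_pair hxw]
  have hts : t ∈ s \ {x, w} := ht ▸ rfl
  simp only [Set.mem_sdiff, Set.mem_insert_iff, Set.mem_singleton_iff, not_or] at hts
  refine ⟨t, hts.2.1, hts.2.2, ?_⟩
  rw [← Set.union_sdiff_cancel hxws, ht, Set.insert_union, Set.singleton_union]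

theorem clawfree_triangles_no_common_edge_general {V : Type*} (U : SimpleGraph V)
    (h1 : ClawFree U) (h2 : ClawFree Uᶜ)
    (x : V) (B : Set V) (hxB : x ∈ B) (hB3 : B.ncard = 3) (hB : Uᶜ.IsClique B)
    (T1 T2 : Set V) (hT1 : U.IsClique T1) (hT1c : T1.ncard = 3) (hxT1 : x ∈ T1)
    (hT2 : U.IsClique T2) (hT2c : T2.ncard = 3) (hxT2 : x ∈ T2)
    (hne : T1 ≠ T2) :
    T1 ∩ T2 = {x} := by
  obtain ⟨y, hyB, hyx⟩ := Set.exists_ne_of_one_lt_ncard (by rw [hB3]; norm_num) x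
  obtain ⟨z, hzx, hzy, rfl⟩ := Set.exists_eq_triple_of_ncard_eq_three hB3 hxB hyB hyx.symm
  refine Set.eq_singleton_iff_unique_mem.mpr ⟨⟨hxT1, hxT2⟩, fun a ⟨haT1, haT2⟩ => ?_⟩
  by_contra hax
  obtain ⟨b, hbx, hba, rfl⟩ := Set.exists_eq_triple_of_ncard_eq_three hT1c hxT1 haT1 (Ne.symm hax)
  obtain ⟨d, hdx, hda, rfl⟩ := Set.exists_eq_triple_of_ncard_eq_three hT2c hxT2 haT2 (Ne.symm hax)
  have hbd : b ≠ d := by rintro rfl; exact hne rfl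
  have hUc {u v : V} (hu : u ∈ ({x, y, z} : Set V)) (hv : v ∈ ({x, y, z} : Set V)) (huv : u ≠ v) :
      ¬U.Adj u v := (hB hu hv huv).2
  exact false_of_isIndep_of_triangles_on_edge h1 h2 (hT1 (by simp) (by simp) (Ne.symm hax))
    (hT1 (by simp) (by simp) hbx.symm) (hT1 (by simp) (by simp) hba.symm)
    (hT2 (by simp) (by simp) hdx.symm) (hT2 (by simp) (by simp) hda.symm) hbd
    hyx.symm hzx.symm hzy.symm (hUc (by simp) (by simp) hyx.symm)
    (hUc (by simp) (by simp) hzx.symm) (hUc (by simp) (by simp) hzy.symm)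

/-- Let `U` and its complement be claw-free and let `x` belong to a 3-element
    independent set. Then two distinct triangles of `U` containing `x` meet
    exactly in `x`. -/
theorem clawfree_triangles_no_common_edge {V : Type*} [Fintype V] (U : SimpleGraph V)
    (h1 : ClawFree U) (h2 : ClawFree Uᶜ)
    (x : V) (B : Set V) (hxB : x ∈ B) (hB3 : B.ncard = 3) (hB : Uᶜ.IsClique B)
    (T1 T2 : Set V) (hT1 : U.IsClique T1) (hT1c : T1.ncard = 3) (hxT1 : x ∈ T1)
    (hT2 : U.IsClique T2) (hT2c : T2.ncard = 3) (hxT2 : x ∈ T2)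
    (hne : T1 ≠ T2) :
    T1 ∩ T2 = {x} :=
  clawfree_triangles_no_common_edge_general U h1 h2 x B hxB hB3 hB T1 T2 hT1 hT1c hxT1 hT2 hT2c hxT2
    hne
end

section
/- Let U be a graph such that both U and its complement are claw-free, and let x be a vertex of U belonging to a 3-element independent set B. Then the degree of x in U is at most 4. Moreover, the subgraph W induced by U on the union of B and the neighborhood N_U(x) satisfies: if the degree of x in U equals 3, then W is isomorphic to the complement of A6 or to the complement of E6; if the degree of x in U equals 4, then W is isomorphic to the complement of P_{9−ε}. -/
open SimpleGraph

instance : Fact (Nat.Prime 3) := ⟨by norm_num⟩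

/-- The Paley graph on the 9-element field `GF(9)`: two distinct vertices `x`, `y`
    are adjacent iff `x - y` is a (nonzero) square. -/
def P9 : SimpleGraph (GaloisField 3 2) :=
  SimpleGraph.fromRel (fun a b => IsSquare (a - b))

/-- `P_{9-v}`: the Paley graph `P9` with one vertex deleted (well defined up to
    isomorphism by vertex-transitivity). -/
def P9minusV : SimpleGraph {x : GaloisField 3 2 // x ≠ 0} :=
  P9.induce {x : GaloisField 3 2 | x ≠ 0}

/-- `P_{9-ε}`: the Paley graph `P9` with the two endpoints of an edge deleted
    (well defined up to isomorphism by edge-transitivity); here we delete the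
    endpoints of the edge `{0, 1}`. -/
def P9minusEps : SimpleGraph {x : GaloisField 3 2 // x ≠ 0 ∧ x ≠ 1} :=
  P9.induce {x : GaloisField 3 2 | x ≠ 0 ∧ x ≠ 1}

/-
Write `B = {x, y, z}`. A claw centred at a neighbour `n` of `x` shows that `n` is adjacent to at
most one of `y`, `z`; a claw of `Uᶜ` centred at `y` shows that the neighbours of `x` not adjacent
to `y` are pairwise nonadjacent, so that, `x` being no claw centre, there are at most two of them.
Hence `x` has at least `deg x - 2` neighbours adjacent to `y`, as many adjacent to `z`, and these
are disjoint, so `2 (deg x - 2) ≤ deg x`. For `deg x = 3` or `4` the same two kinds of claws fix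
every adjacency in `B ∪ N(x)` up to relabelling. To recognise `P_{9-ε}ᶜ`, write
`GF(9) = 𝔽₃[i]` with `i² = -1`: the nonzero squares are `±1, ±i`, so `P9` is the rook's graph
`K₃ □ K₃`.
-/

open Function
open scoped Finset

section

variable {V : Type*}

theorem ClawFree.adj_of_compl_adj {G : SimpleGraph V} (hG : ClawFree G) {x a b c : V}
    (ha : G.Adj x a) (hb : G.Adj x b) (hc : G.Adj x c) (hac : Gᶜ.Adj a c) (hbc : Gᶜ.Adj b c)
    (hab : a ≠ b) : G.Adj a b := by
  by_contra hnab
  rw [compl_adj] at hac hbc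
  refine hG.false ⟨⟨![x, a, b, c], ?_⟩, fun {i j} => ?_⟩
  · intro i j hij
    fin_cases i <;> fin_cases j <;>
      simp_all [ha.ne, hb.ne, hc.ne, ha.ne', hb.ne', hc.ne', hac.1.symm, hbc.1.symm]
  · show G.Adj (![x, a, b, c] i) (![x, a, b, c] j) ↔ claw.Adj i j
    fin_cases i <;> fin_cases j <;> simp_all [claw, adj_comm]

theorem SimpleGraph.compl_adj_of_adj_of_not_adj {G : SimpleGraph V} {w a b : V}
    (hwa : G.Adj w a) (hwb : ¬G.Adj w b) (hab : ¬G.Adj a b) : Gᶜ.Adj a b :=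
  ⟨fun h => hwb (h ▸ hwa), hab⟩

theorem ClawFree.card_le_two {G : SimpleGraph V} (hG : ClawFree G) {x : V} {s : Finset V}
    (hs : ∀ a ∈ s, G.Adj x a) (hind : G.IsIndepSet s) : #s ≤ 2 := by
  by_contra! h
  obtain ⟨a, b, c, ha, hb, hc, hab, hac, hbc⟩ := Finset.two_lt_card_iff.1 h
  exact hind ha hb hab (hG.adj_of_compl_adj (hs a ha) (hs b hb) (hs c hc) ⟨hac, hind ha hc hac⟩
    ⟨hbc, hind hb hc hbc⟩ hab)

theorem SimpleGraph.IsClique.exists_eq_triple {G : SimpleGraph V} {B : Set V} {x : V}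
    (hB : G.IsClique B) (hx : x ∈ B) (h3 : B.ncard = 3) :
    ∃ y z, G.Adj x y ∧ G.Adj x z ∧ G.Adj y z ∧ B = {x, y, z} := by
  obtain ⟨y, z, hyz, hB'⟩ := Set.ncard_eq_two.1
    (by rw [Set.ncard_sdiff_singleton_of_mem hx, h3] : (B \ {x}).ncard = 2)
  have hy : y ∈ B \ {x} := hB' ▸ by simp
  have hz : z ∈ B \ {x} := hB' ▸ by simp
  refine ⟨y, z, hB hx hy.1 (Ne.symm hy.2), hB hx hz.1 (Ne.symm hz.2), hB hy.1 hz.1 hyz, ?_⟩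
  rw [← hB', Set.insert_sdiff_singleton, Set.insert_eq_of_mem hx]

instance {α β : Type*} [DecidableEq α] [DecidableEq β] {G : SimpleGraph α} {H : SimpleGraph β}
    [DecidableRel G.Adj] [DecidableRel H.Adj] : DecidableRel (G □ H).Adj :=
  fun _ _ => decidable_of_iff' _ boxProd_adj

instance : DecidableRel A6.Adj := by unfold A6; infer_instance

instance : DecidableRel E6.Adj := by unfold E6; infer_instance

theorem nonempty_induce_iso_of_labelling {α β : Type*} {U : SimpleGraph V} {H : SimpleGraph β}
    {S : Set V} (f : α → V) (g : α → β) (hg : Bijective g)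
    (hH : ∀ a b, (∀ c, H.Adj (g a) (g c) ↔ H.Adj (g b) (g c)) → a = b)
    (hS : Set.range f = S) (hadj : ∀ a b, U.Adj (f a) (f b) ↔ H.Adj (g a) (g b)) :
    Nonempty (U.induce S ≃g H) := by
  -- `hH`: distinct labels have distinct neighbourhoods in `H`, which forces `f` to be injective.
  have hf : Injective f := fun a b hab => hH a b fun c => by rw [← hadj, ← hadj, hab]
  subst hS
  let e : α ≃ Set.range f := Equiv.ofInjective f hf
  refine ⟨⟨e.symm.trans (Equiv.ofBijective g hg), fun {s t} => ?_⟩⟩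
  obtain ⟨a, rfl⟩ := e.surjective s
  obtain ⟨b, rfl⟩ := e.surjective t
  simpa [e] using (hadj a b).symm

namespace Paley9

local notation "𝔽₉" => GaloisField 3 2

/-- Multiplication of `𝔽₃[i]` in the coordinates `a + b i`. -/
def gaussMul (p q : ZMod 3 × ZMod 3) : ZMod 3 × ZMod 3 :=
  (p.1 * q.1 - p.2 * q.2, p.1 * q.2 + p.2 * q.1)

noncomputable def coord (i : 𝔽₉) (p : ZMod 3 × ZMod 3) : 𝔽₉ :=
  algebraMap (ZMod 3) 𝔽₉ p.1 + algebraMap (ZMod 3) 𝔽₉ p.2 * i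

theorem coord_sub (i : 𝔽₉) (p q : ZMod 3 × ZMod 3) :
    coord i (p - q) = coord i p - coord i q := by
  simp only [coord, Prod.fst_sub, Prod.snd_sub, map_sub]; ring

theorem coord_mul {i : 𝔽₉} (hi : i * i = -1) (p q : ZMod 3 × ZMod 3) :
    coord i p * coord i q = coord i (gaussMul p q) := by
  simp only [coord, gaussMul, map_sub, map_add, map_mul]
  linear_combination (algebraMap (ZMod 3) 𝔽₉ p.2 * algebraMap (ZMod 3) 𝔽₉ q.2) * hi

theorem coord_one_zero (i : 𝔽₉) : coord i (1, 0) = 1 := by simp [coord]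

theorem coord_injective {i : 𝔽₉} (hi : i * i = -1) : Injective (coord i) := by
  have hinv : ∀ d : ZMod 3 × ZMod 3, d ≠ 0 → ∃ e, gaussMul d e = (1, 0) := by decide
  intro p q hpq
  by_contra hne
  obtain ⟨e, he⟩ := hinv (p - q) (sub_ne_zero.2 hne)
  have := coord_mul hi (p - q) e
  rw [he, coord_one_zero, coord_sub, hpq, sub_self, zero_mul] at this
  exact zero_ne_one this

theorem card_eq_nine : Nat.card 𝔽₉ = 9 := GaloisField.card 3 2 (by norm_num)

theorem coord_bijective {i : 𝔽₉} (hi : i * i = -1) : Bijective (coord i) :=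
  (coord_injective hi).bijective_of_nat_card_le (by rw [card_eq_nine]; simp)

theorem exists_mul_self_eq_neg_one : ∃ i : 𝔽₉, i * i = -1 := by
  let := Fintype.ofFinite 𝔽₉
  obtain ⟨i, hi⟩ := (FiniteField.isSquare_neg_one_iff (F := 𝔽₉)).2 (by
    rw [← Nat.card_eq_fintype_card, card_eq_nine]; decide)
  exact ⟨i, hi.symm⟩

theorem isSquare_coord_iff {i : 𝔽₉} (hi : i * i = -1) (d : ZMod 3 × ZMod 3) :
    IsSquare (coord i d) ↔ ∃ s, gaussMul s s = d := by
  constructor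
  · rintro ⟨r, hr⟩
    obtain ⟨s, rfl⟩ := (coord_bijective hi).2 r
    exact ⟨s, coord_injective hi (by rw [← coord_mul hi, hr])⟩
  · rintro ⟨s, rfl⟩
    exact ⟨coord i s, (coord_mul hi s s).symm⟩

abbrev rookGraph : SimpleGraph (ZMod 3 × ZMod 3) := ⊤ □ ⊤

/-- The nonzero squares of `𝔽₃[i]` are `±1` and `±i`, the nonzero points on the two axes. -/
theorem rookGraph_adj_iff (p q : ZMod 3 × ZMod 3) :
    rookGraph.Adj p q ↔ p ≠ q ∧ ((∃ s, gaussMul s s = p - q) ∨ ∃ s, gaussMul s s = q - p) := by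
  revert p q
  decide

theorem P9_adj_coord_iff {i : 𝔽₉} (hi : i * i = -1) (p q : ZMod 3 × ZMod 3) :
    P9.Adj (coord i p) (coord i q) ↔ rookGraph.Adj p q := by
  rw [P9, fromRel_adj, rookGraph_adj_iff, (coord_injective hi).ne_iff, ← coord_sub, ← coord_sub,
    isSquare_coord_iff hi, isSquare_coord_iff hi]

theorem exists_rookGraph_iso_P9 : ∃ e : rookGraph ≃g P9, e 0 = 0 ∧ e (1, 0) = 1 := by
  obtain ⟨i, hi⟩ := exists_mul_self_eq_neg_one
  exact ⟨⟨Equiv.ofBijective _ (coord_bijective hi), P9_adj_coord_iff hi _ _⟩,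
    show coord i 0 = 0 by simp [coord], coord_one_zero i⟩

/-- The cells of the `3 × 3` grid other than `(0, 0)` and `(1, 0)`, placed so that they receive
the vertices `x, y, z, a₁, a₂, b₁, b₂` of `nonempty_iso_compl_P9minusEps`. -/
def gridCells : Fin 7 → ZMod 3 × ZMod 3 :=
  ![(2, 0), (2, 1), (2, 2), (0, 2), (1, 2), (1, 1), (0, 1)]

theorem exists_bijective_compl_P9minusEps_adj :
    ∃ g : Fin 7 → {w : 𝔽₉ // w ≠ 0 ∧ w ≠ 1}, Bijective g ∧
      ∀ i j, P9minusEpsᶜ.Adj (g i) (g j) ↔ rookGraphᶜ.Adj (gridCells i) (gridCells j) := by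
  obtain ⟨e, he0, he1⟩ := exists_rookGraph_iso_P9
  have hcells : ∀ k, gridCells k ≠ 0 ∧ gridCells k ≠ (1, 0) := by decide
  have hmem : ∀ k, e (gridCells k) ≠ 0 ∧ e (gridCells k) ≠ 1 := fun k => by
    rw [← he0, ← he1, e.injective.ne_iff, e.injective.ne_iff]; exact hcells k
  have hinj : Injective gridCells := by decide
  refine ⟨fun k => ⟨e (gridCells k), hmem k⟩, ⟨fun i j h => ?_, fun w => ?_⟩, fun i j => ?_⟩
  · exact hinj (e.injective (congrArg Subtype.val h))
  · have hcover : ∀ p : ZMod 3 × ZMod 3, p ≠ 0 → p ≠ (1, 0) → ∃ k, gridCells k = p := by decide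
    obtain ⟨p, hp⟩ := e.surjective w.1
    obtain ⟨k, rfl⟩ := hcover p (by rintro rfl; exact w.2.1 (hp ▸ he0))
      (by rintro rfl; exact w.2.2 (hp ▸ he1))
    exact ⟨k, Subtype.ext hp⟩
  · simp only [P9minusEps, compl_adj, comap_adj, Embedding.coe_subtype, ne_eq,
      Subtype.mk.injEq, e.injective.eq_iff, e.map_adj_iff]

end Paley9

section Configuration

variable {U : SimpleGraph V} {x y z : V}

theorem ClawFree.not_adj_of_adj_of_adj_s16 (hU : ClawFree U) (hxy : Uᶜ.Adj x y) (hxz : Uᶜ.Adj x z)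
    (hyz : Uᶜ.Adj y z) {n : V} (hx : U.Adj x n) (hy : U.Adj y n) : ¬U.Adj z n := fun hz =>
  hxy.2 (hU.adj_of_compl_adj hx.symm hy.symm hz.symm hxz hyz hxy.1)

theorem ClawFree.not_adj_of_not_adj_of_not_adj (hUc : ClawFree Uᶜ) (hxy : ¬U.Adj x y) {a b : V}
    (ha : U.Adj x a) (hb : U.Adj x b) (hay : ¬U.Adj y a) (hby : ¬U.Adj y b) : ¬U.Adj a b := by
  intro hab
  have hax : Uᶜᶜ.Adj a x := by rw [compl_compl]; exact ha.symm
  have hbx : Uᶜᶜ.Adj b x := by rw [compl_compl]; exact hb.symm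
  exact (hUc.adj_of_compl_adj (x := y) ⟨fun h => hxy (h ▸ ha), hay⟩ ⟨fun h => hxy (h ▸ hb), hby⟩
    ⟨fun h => hay (h ▸ ha), fun h => hxy h.symm⟩ hax hbx hab.ne).2 hab

theorem nonempty_iso_compl_A6 (hU : ClawFree U) (hUc : ClawFree Uᶜ) (hxy : Uᶜ.Adj x y)
    (hxz : Uᶜ.Adj x z) (hyz : Uᶜ.Adj y z) {a b c : V} (hN : U.neighborSet x = {a, b, c})
    (hya : U.Adj y a) (hzb : U.Adj z b) (hyc : ¬U.Adj y c) (hzc : ¬U.Adj z c) :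
    Nonempty (U.induce ({x, y, z} ∪ U.neighborSet x) ≃g A6ᶜ) := by
  have hxa : U.Adj x a := by simp [← mem_neighborSet, hN]
  have hxb : U.Adj x b := by simp [← mem_neighborSet, hN]
  have hxc : U.Adj x c := by simp [← mem_neighborSet, hN]
  have hza : ¬U.Adj z a := hU.not_adj_of_adj_of_adj_s16 hxy hxz hyz hxa hya
  have hyb : ¬U.Adj y b := hU.not_adj_of_adj_of_adj_s16 hxz hxy hyz.symm hxb hzb
  have hac : ¬U.Adj a c := hUc.not_adj_of_not_adj_of_not_adj hxz.2 hxa hxc hza hzc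
  have hbc : ¬U.Adj b c := hUc.not_adj_of_not_adj_of_not_adj hxy.2 hxb hxc hyb hyc
  have hab : U.Adj a b := hU.adj_of_compl_adj hxa hxb hxc (compl_adj_of_adj_of_not_adj hya hyc hac)
    (compl_adj_of_adj_of_not_adj hzb hzc hbc) fun h => hyb (h ▸ hya)
  rw [compl_adj] at hxy hxz hyz
  refine nonempty_induce_iso_of_labelling ![c, y, z, x, a, b] id bijective_id (by decide) ?_ ?_
  · rw [hN]; ext v; simp; tauto
  · intro i j
    fin_cases i <;> fin_cases j <;> simp_all +decide [adj_comm]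

theorem nonempty_iso_compl_E6 (hU : ClawFree U) (hUc : ClawFree Uᶜ) (hxy : Uᶜ.Adj x y)
    (hxz : Uᶜ.Adj x z) (hyz : Uᶜ.Adj y z) {a b c : V} (hN : U.neighborSet x = {a, b, c})
    (hya : U.Adj y a) (hyb : U.Adj y b) (hzc : U.Adj z c) (hab : a ≠ b) :
    Nonempty (U.induce ({x, y, z} ∪ U.neighborSet x) ≃g E6ᶜ) := by
  have hxa : U.Adj x a := by simp [← mem_neighborSet, hN]
  have hxb : U.Adj x b := by simp [← mem_neighborSet, hN]
  have hxc : U.Adj x c := by simp [← mem_neighborSet, hN]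
  have hza : ¬U.Adj z a := hU.not_adj_of_adj_of_adj_s16 hxy hxz hyz hxa hya
  have hzb : ¬U.Adj z b := hU.not_adj_of_adj_of_adj_s16 hxy hxz hyz hxb hyb
  have hyc : ¬U.Adj y c := hU.not_adj_of_adj_of_adj_s16 hxz hxy hyz.symm hxc hzc
  have hnab : ¬U.Adj a b := hUc.not_adj_of_not_adj_of_not_adj hxz.2 hxa hxb hza hzb
  wlog hac : U.Adj a c generalizing a b
  · refine this (by rw [hN, Set.insert_comm]) hyb hya hab.symm hxb hxa hzb hza
      (fun h => hnab h.symm) ?_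
    by_contra hbc
    exact hnab (hU.adj_of_compl_adj hxa hxb hxc (compl_adj_of_adj_of_not_adj hya hyc hac)
      (compl_adj_of_adj_of_not_adj hyb hyc hbc) hab)
  have hbc : ¬U.Adj b c := fun hbc => hnab (hU.adj_of_compl_adj hac.symm hbc.symm hzc.symm
    (compl_adj_of_adj_of_not_adj hxa hxz.2 (mt Adj.symm hza))
    (compl_adj_of_adj_of_not_adj hxb hxz.2 (mt Adj.symm hzb)) hab)
  rw [compl_adj] at hxy hxz hyz
  refine nonempty_induce_iso_of_labelling ![y, c, b, z, x, a] id bijective_id (by decide) ?_ ?_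
  · rw [hN]; ext v; simp; tauto
  · intro i j
    fin_cases i <;> fin_cases j <;> simp_all +decide [adj_comm]

theorem nonempty_iso_compl_P9minusEps (hU : ClawFree U) (hUc : ClawFree Uᶜ) (hxy : Uᶜ.Adj x y)
    (hxz : Uᶜ.Adj x z) (hyz : Uᶜ.Adj y z) {a₁ a₂ b₁ b₂ : V}
    (hN : U.neighborSet x = {a₁, a₂, b₁, b₂}) (hya₁ : U.Adj y a₁) (hya₂ : U.Adj y a₂)
    (hzb₁ : U.Adj z b₁) (hzb₂ : U.Adj z b₂) (ha : a₁ ≠ a₂) (hb : b₁ ≠ b₂) :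
    Nonempty (U.induce ({x, y, z} ∪ U.neighborSet x) ≃g P9minusEpsᶜ) := by
  have hxa₁ : U.Adj x a₁ := by simp [← mem_neighborSet, hN]
  have hxa₂ : U.Adj x a₂ := by simp [← mem_neighborSet, hN]
  have hxb₁ : U.Adj x b₁ := by simp [← mem_neighborSet, hN]
  have hxb₂ : U.Adj x b₂ := by simp [← mem_neighborSet, hN]
  have hza₁ : ¬U.Adj z a₁ := hU.not_adj_of_adj_of_adj_s16 hxy hxz hyz hxa₁ hya₁
  have hza₂ : ¬U.Adj z a₂ := hU.not_adj_of_adj_of_adj_s16 hxy hxz hyz hxa₂ hya₂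
  have hyb₁ : ¬U.Adj y b₁ := hU.not_adj_of_adj_of_adj_s16 hxz hxy hyz.symm hxb₁ hzb₁
  have hyb₂ : ¬U.Adj y b₂ := hU.not_adj_of_adj_of_adj_s16 hxz hxy hyz.symm hxb₂ hzb₂
  have hna : ¬U.Adj a₁ a₂ := hUc.not_adj_of_not_adj_of_not_adj hxz.2 hxa₁ hxa₂ hza₁ hza₂
  have hnb : ¬U.Adj b₁ b₂ := hUc.not_adj_of_not_adj_of_not_adj hxy.2 hxb₁ hxb₂ hyb₁ hyb₂
  -- The edges between `{a₁, a₂}` and `{b₁, b₂}` form a perfect matching.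
  wlog h₁₁ : U.Adj a₁ b₁ generalizing b₁ b₂
  · refine this (by rw [hN, Set.pair_comm b₁]) hzb₂ hzb₁ hb.symm hxb₂ hxb₁ hyb₂ hyb₁
      (fun h => hnb h.symm) ?_
    by_contra h₁₂
    exact hnb (hU.adj_of_compl_adj hxb₁ hxb₂ hxa₁ (compl_adj_of_adj_of_not_adj hya₁ hyb₁ h₁₁).symm
      (compl_adj_of_adj_of_not_adj hya₁ hyb₂ h₁₂).symm hb)
  have h₁₂ : ¬U.Adj a₁ b₂ := fun h => hnb (hU.adj_of_compl_adj h₁₁ h hya₁.symm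
    (compl_adj_of_adj_of_not_adj hxb₁ hxy.2 (mt Adj.symm hyb₁))
    (compl_adj_of_adj_of_not_adj hxb₂ hxy.2 (mt Adj.symm hyb₂)) hb)
  have h₂₂ : U.Adj a₂ b₂ := by
    by_contra h₂₂
    exact h₂₂ (hU.adj_of_compl_adj hxa₂ hxb₂ hxa₁ ⟨ha.symm, mt Adj.symm hna⟩
      (compl_adj_of_adj_of_not_adj hzb₂ hza₁ (mt Adj.symm h₁₂)) fun h => hyb₂ (h ▸ hya₂))
  have h₂₁ : ¬U.Adj a₂ b₁ := fun h => hna (hU.adj_of_compl_adj h₁₁.symm h.symm hzb₁.symm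
    (compl_adj_of_adj_of_not_adj hxa₁ hxz.2 (mt Adj.symm hza₁))
    (compl_adj_of_adj_of_not_adj hxa₂ hxz.2 (mt Adj.symm hza₂)) ha)
  obtain ⟨g, hg, hgadj⟩ := Paley9.exists_bijective_compl_P9minusEps_adj
  rw [compl_adj] at hxy hxz hyz
  refine nonempty_induce_iso_of_labelling ![x, y, z, a₁, a₂, b₁, b₂] g hg
    (by simp only [hgadj]; decide) ?_ ?_
  · rw [hN]; ext v; simp; tauto
  · intro i j
    rw [hgadj]
    fin_cases i <;> fin_cases j <;> simp_all +decide [adj_comm, Paley9.gridCells]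

section Degree

open Finset

variable [Fintype V] [DecidableEq V] [DecidableRel U.Adj]

theorem card_neighborFinset_sdiff_le_two (hU : ClawFree U) (hUc : ClawFree Uᶜ)
    (hxy : ¬U.Adj x y) : #(U.neighborFinset x \ U.neighborFinset y) ≤ 2 := by
  refine hU.card_le_two (x := x) (fun a ha => ?_) fun a ha b hb _ => ?_
  · exact (mem_neighborFinset _ _ _).1 (mem_sdiff.1 ha).1
  · simp only [coe_sdiff, coe_neighborFinset, Set.mem_sdiff, mem_neighborSet] at ha hb
    exact hUc.not_adj_of_not_adj_of_not_adj hxy ha.1 hb.1 ha.2 hb.2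

theorem degree_le_card_inter_add_two (hU : ClawFree U) (hUc : ClawFree Uᶜ) (hxy : ¬U.Adj x y) :
    U.degree x ≤ #(U.neighborFinset x ∩ U.neighborFinset y) + 2 := by
  have := card_neighborFinset_sdiff_le_two hU hUc hxy
  rw [← card_neighborFinset_eq_degree, ← card_sdiff_add_card_inter _ (U.neighborFinset y)]
  omega

theorem disjoint_inter_neighborFinset (hU : ClawFree U) (hxy : Uᶜ.Adj x y) (hxz : Uᶜ.Adj x z)
    (hyz : Uᶜ.Adj y z) :
    Disjoint (U.neighborFinset x ∩ U.neighborFinset y)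
      (U.neighborFinset x ∩ U.neighborFinset z) := by
  refine disjoint_left.2 fun n hy hz => ?_
  simp only [mem_inter, mem_neighborFinset] at hy hz
  exact hU.not_adj_of_adj_of_adj_s16 hxy hxz hyz hy.1 hy.2 hz.2

theorem card_inter_add_card_inter_le_degree (hU : ClawFree U) (hxy : Uᶜ.Adj x y)
    (hxz : Uᶜ.Adj x z) (hyz : Uᶜ.Adj y z) :
    #(U.neighborFinset x ∩ U.neighborFinset y) + #(U.neighborFinset x ∩ U.neighborFinset z) ≤
      U.degree x := by
  rw [← card_union_of_disjoint (disjoint_inter_neighborFinset hU hxy hxz hyz),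
    ← card_neighborFinset_eq_degree]
  exact card_le_card (union_subset inter_subset_left inter_subset_left)

theorem degree_le_four (hU : ClawFree U) (hUc : ClawFree Uᶜ) (hxy : Uᶜ.Adj x y)
    (hxz : Uᶜ.Adj x z) (hyz : Uᶜ.Adj y z) : U.degree x ≤ 4 := by
  have := degree_le_card_inter_add_two hU hUc hxy.2
  have := degree_le_card_inter_add_two hU hUc hxz.2
  have := card_inter_add_card_inter_le_degree hU hxy hxz hyz
  omega

theorem nonempty_iso_of_degree_eq_three (hU : ClawFree U) (hUc : ClawFree Uᶜ) (hxy : Uᶜ.Adj x y)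
    (hxz : Uᶜ.Adj x z) (hyz : Uᶜ.Adj y z) (h3 : U.degree x = 3) :
    Nonempty (U.induce ({x, y, z} ∪ U.neighborSet x) ≃g A6ᶜ) ∨
      Nonempty (U.induce ({x, y, z} ∪ U.neighborSet x) ≃g E6ᶜ) := by
  have hcardY := degree_le_card_inter_add_two hU hUc hxy.2
  have hcardZ := degree_le_card_inter_add_two hU hUc hxz.2
  obtain ⟨a, ha⟩ : (U.neighborFinset x ∩ U.neighborFinset y).Nonempty := card_pos.1 (by omega)
  obtain ⟨b, hb⟩ : (U.neighborFinset x ∩ U.neighborFinset z).Nonempty := card_pos.1 (by omega)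
  simp only [mem_inter, mem_neighborFinset] at ha hb
  have hab : a ≠ b := fun h => hU.not_adj_of_adj_of_adj_s16 hxy hxz hyz ha.1 ha.2 (h ▸ hb.2)
  have hbN : b ∈ (U.neighborFinset x).erase a := mem_erase.2 ⟨hab.symm, by simpa using hb.1⟩
  obtain ⟨c, hc⟩ := card_eq_one.1 (by
    rw [card_erase_of_mem hbN, card_erase_of_mem (by simpa using ha.1),
      card_neighborFinset_eq_degree, h3] : #(((U.neighborFinset x).erase a).erase b) = 1)
  have hcN : c ∈ ((U.neighborFinset x).erase a).erase b := by simp [hc]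
  simp only [mem_erase] at hcN
  have hN : U.neighborSet x = {a, b, c} := by
    rw [← coe_neighborFinset, ← insert_erase (by simpa using ha.1 : a ∈ U.neighborFinset x),
      ← insert_erase hbN, hc]
    simp
  by_cases hyc : U.Adj y c
  · exact .inr (nonempty_iso_compl_E6 hU hUc hxy hxz hyz (by rw [hN, Set.pair_comm b])
      ha.2 hyc hb.2 hcN.2.1.symm)
  by_cases hzc : U.Adj z c
  · refine .inr ?_
    rw [Set.pair_comm y]
    exact nonempty_iso_compl_E6 hU hUc hxz hxy hyz.symm (by rw [hN]; ext; simp; tauto)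
      hb.2 hzc ha.2 hcN.1.symm
  · exact .inl (nonempty_iso_compl_A6 hU hUc hxy hxz hyz hN ha.2 hb.2 hyc hzc)

theorem nonempty_iso_of_degree_eq_four (hU : ClawFree U) (hUc : ClawFree Uᶜ) (hxy : Uᶜ.Adj x y)
    (hxz : Uᶜ.Adj x z) (hyz : Uᶜ.Adj y z) (h4 : U.degree x = 4) :
    Nonempty (U.induce ({x, y, z} ∪ U.neighborSet x) ≃g P9minusEpsᶜ) := by
  have hcardY := degree_le_card_inter_add_two hU hUc hxy.2
  have hcardZ := degree_le_card_inter_add_two hU hUc hxz.2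
  have hcardYZ := card_inter_add_card_inter_le_degree hU hxy hxz hyz
  obtain ⟨a₁, a₂, ha, hYeq⟩ := card_eq_two.1 (by omega :
    #(U.neighborFinset x ∩ U.neighborFinset y) = 2)
  obtain ⟨b₁, b₂, hb, hZeq⟩ := card_eq_two.1 (by omega :
    #(U.neighborFinset x ∩ U.neighborFinset z) = 2)
  have hN : U.neighborFinset x ∩ U.neighborFinset y ∪ U.neighborFinset x ∩ U.neighborFinset z =
      U.neighborFinset x := by
    refine eq_of_subset_of_card_le (union_subset inter_subset_left inter_subset_left) ?_
    rw [card_union_of_disjoint (disjoint_inter_neighborFinset hU hxy hxz hyz),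
      card_neighborFinset_eq_degree]
    omega
  have hY : ∀ v ∈ U.neighborFinset x ∩ U.neighborFinset y, U.Adj y v := fun v hv => by
    simpa using (mem_inter.1 hv).2
  have hZ : ∀ v ∈ U.neighborFinset x ∩ U.neighborFinset z, U.Adj z v := fun v hv => by
    simpa using (mem_inter.1 hv).2
  rw [hYeq] at hY
  rw [hZeq] at hZ
  refine nonempty_iso_compl_P9minusEps hU hUc hxy hxz hyz ?_ (hY _ (by simp)) (hY _ (by simp))
    (hZ _ (by simp)) (hZ _ (by simp)) ha hb
  rw [← coe_neighborFinset, ← hN, hYeq, hZeq]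
  ext
  simp
  tauto

end Degree

end Configuration

end

/-- Let `U` and its complement be claw-free and let `x` belong to a 3-element
    independent set `B`. Then `x` has degree at most 4; moreover the subgraph
    `W` induced on `B ∪ N_U(x)` is isomorphic to `A6ᶜ` or `E6ᶜ` when
    `deg x = 3`, and to `P_{9-ε}ᶜ` when `deg x = 4`. -/
theorem clawfree_indep_degree_le_four {V : Type*} [Fintype V]
    (U : SimpleGraph V) [DecidableRel U.Adj]
    (h : ClawFree U ∧ ClawFree Uᶜ)
    (x : V) (B : Set V) (hxB : x ∈ B) (hB3 : B.ncard = 3) (hB : Uᶜ.IsClique B) :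
    U.degree x ≤ 4 ∧
      (U.degree x = 3 →
        Nonempty (U.induce (B ∪ U.neighborSet x) ≃g A6ᶜ) ∨
          Nonempty (U.induce (B ∪ U.neighborSet x) ≃g E6ᶜ)) ∧
      (U.degree x = 4 →
        Nonempty (U.induce (B ∪ U.neighborSet x) ≃g P9minusEpsᶜ)) := by
  classical
  obtain ⟨hU, hUc⟩ := h
  obtain ⟨y, z, hxy, hxz, hyz, rfl⟩ := hB.exists_eq_triple hxB hB3
  exact ⟨degree_le_four hU hUc hxy hxz hyz, nonempty_iso_of_degree_eq_three hU hUc hxy hxz hyz,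
    nonempty_iso_of_degree_eq_four hU hUc hxy hxz hyz⟩
end

section
/- Let G and G' be two graphs on the same vertex set V and let U be their Boolean sum G ∔ G'. The following are equivalent: (a) G and G' have the same 3-element homogeneous subsets; (b) for all distinct vertices x, y, z of V, if U({x,y}) = U({x,z}) ≠ U({y,z}) then G({x,y}) ≠ G({x,z}) (where for a pair e, H(e) = 1 if e is an edge of the graph H and H(e) = 0 otherwise); (c) the sets A1 := E(U) ∩ E(G) and A2 := E(U) \ E(G) partition the vertex set of S(U) into two independent sets of S(U), and the sets B1 := E(Ū) ∩ E(G) and B2 := E(Ū) \ E(G) partition the vertex set of S(Ū) into two independent sets of S(Ū). -/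
open SimpleGraph

lemma key (a b c a' b' c' u v w : Prop) (hu : u ↔ ¬(a ↔ a')) (hv : v ↔ ¬(b ↔ b'))
    (hw : w ↔ ¬(c ↔ c')) :
    ((a ∧ b ∧ c ∨ ¬a ∧ ¬b ∧ ¬c) ↔ (a' ∧ b' ∧ c' ∨ ¬a' ∧ ¬b' ∧ ¬c')) ↔
      (((u ↔ v) → ¬(v ↔ w) → ¬(a ↔ b)) ∧ ((u ↔ w) → ¬(w ↔ v) → ¬(a ↔ c)) ∧
        ((v ↔ w) → ¬(w ↔ u) → ¬(b ↔ c))) := by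
  by_cases ha : a <;> by_cases hb : b <;> by_cases hc : c <;>
    by_cases ha' : a' <;> by_cases hb' : b' <;> by_cases hc' : c' <;>
    simp_all

lemma clique3 {V : Type*} (G : SimpleGraph V) {x y z : V} (hxy : x ≠ y) (hxz : x ≠ z)
    (hyz : y ≠ z) :
    G.IsClique ({x, y, z} : Set V) ↔ G.Adj x y ∧ G.Adj x z ∧ G.Adj y z := by
  constructor
  · intro h
    exact ⟨h (by simp) (by simp) hxy, h (by simp) (by simp) hxz, h (by simp) (by simp) hyz⟩
  · rintro ⟨h1, h2, h3⟩ p hp q hq hpq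
    simp only [Set.mem_insert_iff, Set.mem_singleton_iff] at hp hq
    rcases hp with rfl | rfl | rfl <;> rcases hq with rfl | rfl | rfl <;>
      first
        | exact absurd rfl hpq
        | assumption
        | exact h1.symm
        | exact h2.symm
        | exact h3.symm

lemma edgeGraph_cliques_iff {V : Type*} (W : SimpleGraph V) (P : Sym2 V → Prop) :
    ((edgeGraph W)ᶜ.IsClique {e : W.edgeSet | P (e : Sym2 V)} ∧
      (edgeGraph W)ᶜ.IsClique {e : W.edgeSet | ¬ P (e : Sym2 V)}) ↔
    (∀ x y z : V, x ≠ y → x ≠ z → y ≠ z → W.Adj x y → W.Adj x z → ¬ W.Adj y z →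
      ¬ (P s(x, y) ↔ P s(x, z))) := by
  constructor
  · rintro ⟨h1, h2⟩ x y z hxy hxz hyz wxy wxz wyz
    set e : W.edgeSet := ⟨s(x, y), wxy⟩ with he
    set f : W.edgeSet := ⟨s(x, z), wxz⟩ with hf
    have hef : e ≠ f := by
      intro h
      have := congrArg Subtype.val h
      simp only [he, hf, Sym2.eq, Sym2.rel_iff', Prod.mk.injEq, Prod.swap_prod_mk] at this
      rcases this with ⟨-, h'⟩ | ⟨h', -⟩
      · exact hyz h'
      · exact hxz h'
    have hadj : (edgeGraph W).Adj e f := by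
      rw [edgeGraph, fromRel_adj]
      exact ⟨hef, Or.inl ⟨x, y, z, hxy, hxz, hyz, rfl, rfl, wyz⟩⟩
    by_cases hp : P s(x, y) <;> by_cases hq : P s(x, z)
    · exact absurd hadj ((h1 hp hq hef).2)
    · simp [hp, hq]
    · simp [hp, hq]
    · exact absurd hadj ((h2 hp hq hef).2)
  · intro h
    constructor <;>
    · rintro e he f hf hef
      rw [compl_adj]
      refine ⟨hef, fun hadj => ?_⟩
      rw [edgeGraph, fromRel_adj] at hadj
      obtain ⟨-, hr | hr⟩ := hadj <;>
      · obtain ⟨x, y, z, hxy, hxz, hyz, heq, hfq, hnw⟩ := hr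
        have wxy : W.Adj x y := by rw [← W.mem_edgeSet, ← heq]; exact Subtype.coe_prop _
        have wxz : W.Adj x z := by rw [← W.mem_edgeSet, ← hfq]; exact Subtype.coe_prop _
        have hc := h x y z hxy hxz hyz wxy wxz hnw
        simp only [Set.mem_setOf_eq] at he hf
        first
          | (rw [heq] at he; rw [hfq] at hf; tauto)
          | (rw [heq] at hf; rw [hfq] at he; tauto)

/-- For graphs `G`, `G'` on the same vertex set with Boolean sum `U`, the
    following are equivalent: (a) `G` and `G'` have the same 3-element
    homogeneous subsets; (b) `U({x,y}) = U({x,z}) ≠ U({y,z})` implies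
    `G({x,y}) ≠ G({x,z})` for all distinct `x, y, z`; (c) the edges of `U`
    belonging to `G` and those not belonging to `G` form two independent sets
    of `S(U)`, and likewise for `Uᶜ` and `S(Uᶜ)`. -/
theorem sameHomog3_iff {V : Type*} [Fintype V] (G G' : SimpleGraph V) (U : SimpleGraph V)
    (hU : U = boolSum G G') :
    (SameHomog3 G G' ↔
      (∀ x y z : V, x ≠ y → x ≠ z → y ≠ z →
        (U.Adj x y ↔ U.Adj x z) → ¬ (U.Adj x z ↔ U.Adj y z) →
        ¬ (G.Adj x y ↔ G.Adj x z))) ∧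
    (SameHomog3 G G' ↔
      ((edgeGraph U)ᶜ.IsClique {e : U.edgeSet | (e : Sym2 V) ∈ G.edgeSet} ∧
        (edgeGraph U)ᶜ.IsClique {e : U.edgeSet | (e : Sym2 V) ∉ G.edgeSet} ∧
        (edgeGraph Uᶜ)ᶜ.IsClique {e : Uᶜ.edgeSet | (e : Sym2 V) ∈ G.edgeSet} ∧
        (edgeGraph Uᶜ)ᶜ.IsClique {e : Uᶜ.edgeSet | (e : Sym2 V) ∉ G.edgeSet})) := by
  classical
  have hAdj : ∀ p q : V, U.Adj p q ↔ ¬(G.Adj p q ↔ G'.Adj p q) := by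
    subst hU
    intro p q
    simp only [boolSum, sup_adj, sdiff_adj]
    tauto
  have hab : SameHomog3 G G' ↔
      (∀ x y z : V, x ≠ y → x ≠ z → y ≠ z →
        (U.Adj x y ↔ U.Adj x z) → ¬ (U.Adj x z ↔ U.Adj y z) →
        ¬ (G.Adj x y ↔ G.Adj x z)) := by
    constructor
    · intro h x y z hxy hxz hyz h1 h2
      have hcard : ({x, y, z} : Finset V).card = 3 :=
        Finset.card_eq_three.mpr ⟨x, y, z, hxy, hxz, hyz, rfl⟩
      have hs := h {x, y, z} hcard
      rw [show ((({x, y, z} : Finset V) : Set V)) = ({x, y, z} : Set V) by simp] at hs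
      rw [clique3 G hxy hxz hyz, clique3 G' hxy hxz hyz, clique3 Gᶜ hxy hxz hyz,
        clique3 G'ᶜ hxy hxz hyz] at hs
      simp only [compl_adj, ne_eq, hxy, hxz, hyz, not_false_eq_true, true_and] at hs
      exact ((key (G.Adj x y) (G.Adj x z) (G.Adj y z) (G'.Adj x y) (G'.Adj x z) (G'.Adj y z)
        (U.Adj x y) (U.Adj x z) (U.Adj y z) (hAdj x y) (hAdj x z) (hAdj y z)).mp hs).1 h1 h2
    · intro h s hcard
      obtain ⟨x, y, z, hxy, hxz, hyz, rfl⟩ := Finset.card_eq_three.mp hcard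
      rw [show ((({x, y, z} : Finset V) : Set V)) = ({x, y, z} : Set V) by simp]
      rw [clique3 G hxy hxz hyz, clique3 G' hxy hxz hyz, clique3 Gᶜ hxy hxz hyz,
        clique3 G'ᶜ hxy hxz hyz]
      simp only [compl_adj, ne_eq, hxy, hxz, hyz, not_false_eq_true, true_and]
      rw [key (G.Adj x y) (G.Adj x z) (G.Adj y z) (G'.Adj x y) (G'.Adj x z) (G'.Adj y z)
        (U.Adj x y) (U.Adj x z) (U.Adj y z) (hAdj x y) (hAdj x z) (hAdj y z)]
      refine ⟨h x y z hxy hxz hyz, ?_, ?_⟩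
      · intro h1 h2
        have := h y x z hxy.symm hyz hxz
          (by rw [U.adj_comm y x]; exact h1) h2
        rw [G.adj_comm y x] at this
        exact this
      · intro h1 h2
        have := h z x y hxz.symm hyz.symm hxy
          (by rw [U.adj_comm z x, U.adj_comm z y]; exact h1)
          (by rw [U.adj_comm z y]; exact h2)
        rw [G.adj_comm z x, G.adj_comm z y] at this
        exact this
  have hbc : (∀ x y z : V, x ≠ y → x ≠ z → y ≠ z →
        (U.Adj x y ↔ U.Adj x z) → ¬ (U.Adj x z ↔ U.Adj y z) →
        ¬ (G.Adj x y ↔ G.Adj x z)) ↔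
      ((edgeGraph U)ᶜ.IsClique {e : U.edgeSet | (e : Sym2 V) ∈ G.edgeSet} ∧
        (edgeGraph U)ᶜ.IsClique {e : U.edgeSet | (e : Sym2 V) ∉ G.edgeSet} ∧
        (edgeGraph Uᶜ)ᶜ.IsClique {e : Uᶜ.edgeSet | (e : Sym2 V) ∈ G.edgeSet} ∧
        (edgeGraph Uᶜ)ᶜ.IsClique {e : Uᶜ.edgeSet | (e : Sym2 V) ∉ G.edgeSet}) := by
    constructor
    · intro h
      have t1 : ∀ x y z : V, x ≠ y → x ≠ z → y ≠ z → U.Adj x y → U.Adj x z → ¬ U.Adj y z →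
          ¬ ((s(x, y) ∈ G.edgeSet) ↔ (s(x, z) ∈ G.edgeSet)) := by
        intro x y z hxy hxz hyz u1 u2 u3
        simp only [mem_edgeSet]
        exact h x y z hxy hxz hyz (iff_of_true u1 u2) (by simp [u2, u3])
      have t2 : ∀ x y z : V, x ≠ y → x ≠ z → y ≠ z → Uᶜ.Adj x y → Uᶜ.Adj x z → ¬ Uᶜ.Adj y z →
          ¬ ((s(x, y) ∈ G.edgeSet) ↔ (s(x, z) ∈ G.edgeSet)) := by
        intro x y z hxy hxz hyz u1 u2 u3
        rw [compl_adj] at u1 u2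
        have u3' : U.Adj y z := by
          by_contra hn
          exact u3 ((compl_adj U y z).mpr ⟨hyz, hn⟩)
        simp only [mem_edgeSet]
        exact h x y z hxy hxz hyz (iff_of_false u1.2 u2.2) (by simp [u2.2, u3'])
      obtain ⟨c1, c2⟩ := (edgeGraph_cliques_iff U (fun e => e ∈ G.edgeSet)).mpr t1
      obtain ⟨c3, c4⟩ := (edgeGraph_cliques_iff Uᶜ (fun e => e ∈ G.edgeSet)).mpr t2
      exact ⟨c1, c2, c3, c4⟩
    · rintro ⟨c1, c2, c3, c4⟩ x y z hxy hxz hyz h1 h2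
      have t1 := (edgeGraph_cliques_iff U (fun e => e ∈ G.edgeSet)).mp ⟨c1, c2⟩
      have t2 := (edgeGraph_cliques_iff Uᶜ (fun e => e ∈ G.edgeSet)).mp ⟨c3, c4⟩
      by_cases u1 : U.Adj x y
      · have u2 : U.Adj x z := h1.mp u1
        have u3 : ¬ U.Adj y z := fun hw => h2 (iff_of_true u2 hw)
        have := t1 x y z hxy hxz hyz u1 u2 u3
        simpa [mem_edgeSet] using this
      · have u2 : ¬ U.Adj x z := fun h' => u1 (h1.mpr h')
        have u3 : U.Adj y z := by
          by_contra hn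
          exact h2 (iff_of_false u2 hn)
        have := t2 x y z hxy hxz hyz ((compl_adj U x y).mpr ⟨hxy, u1⟩) ((compl_adj U x z).mpr ⟨hxz, u2⟩)
          (fun hc => ((compl_adj U y z).mp hc).2 u3)
        simpa [mem_edgeSet] using this
  exact ⟨hab, hab.trans hbc⟩
end

section
/- If U is a bipartite graph, then the edge-graph S(Ū) of the complement of U is bipartite. -/
open SimpleGraph

/-! Colour each edge `{x, y}` of `Uᶜ` by `c x + c y`, where `c` is a proper colouring of `U` with
values in `Fin 2 = ZMod 2`. Edges adjacent in `S(Uᶜ)` have the form `{x, y}`, `{x, z}` with `{y, z}` an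
edge of `U`, so `c y ≠ c z` and cancelling `c x` shows that their colours differ. -/

namespace Sym2

variable {V α : Type*} [AddCommMagma α]

def sumOf (f : V → α) : Sym2 V → α :=
  Sym2.lift ⟨fun x y => f x + f y, fun x y => add_comm (f x) (f y)⟩

@[simp]
theorem sumOf_mk (f : V → α) (x y : V) : sumOf f s(x, y) = f x + f y :=
  rfl

end Sym2

namespace SimpleGraph

variable {V α : Type*} {U : SimpleGraph V}

theorem exists_adj_of_edgeGraph_compl_adj {u v : Uᶜ.edgeSet} (huv : (edgeGraph Uᶜ).Adj u v) :
    ∃ x y z : V, (u : Sym2 V) = s(x, y) ∧ (v : Sym2 V) = s(x, z) ∧ U.Adj y z := by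
  obtain ⟨-, ⟨x, y, z, -, -, hyz, hu, hv, hadj⟩ | ⟨x, y, z, -, -, hyz, hv, hu, hadj⟩⟩ := huv
  · exact ⟨x, y, z, hu, hv, not_not.mp fun h => hadj ⟨hyz, h⟩⟩
  · exact ⟨x, z, y, hu, hv, (not_not.mp fun h => hadj ⟨hyz, h⟩).symm⟩

def Coloring.edgeGraphCompl [AddCommMagma α] [IsLeftCancelAdd α] (c : U.Coloring α) :
    (edgeGraph Uᶜ).Coloring α :=
  Coloring.mk (fun e => Sym2.sumOf c e) fun {u v} huv => by
    obtain ⟨x, y, z, hu, hv, hyz⟩ := exists_adj_of_edgeGraph_compl_adj huv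
    rw [hu, hv, Sym2.sumOf_mk, Sym2.sumOf_mk, Ne, add_right_inj]
    exact c.valid hyz

end SimpleGraph

theorem edgeGraph_compl_bipartite_general {V : Type*} (U : SimpleGraph V)
    (h : U.Colorable 2) : (edgeGraph Uᶜ).Colorable 2 := by
  obtain ⟨c⟩ := h
  exact ⟨c.edgeGraphCompl⟩

/-- If `U` is bipartite, then the edge-graph `S(Uᶜ)` of its complement is
    bipartite. -/
theorem edgeGraph_compl_bipartite {V : Type*} [Fintype V] (U : SimpleGraph V)
    (h : U.Colorable 2) : (edgeGraph Uᶜ).Colorable 2 :=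
  edgeGraph_compl_bipartite_general U h
end
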